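/- arXiv:1706.03921 — 6 statements merged into one kernel-verified Lean document; each statement's English description precedes it below -/
import Mathlib

section
/- Let ϱ : [0,π] → ℝ be continuous and set ϱ₀ := min_{ξ∈[0,π]} ϱ(ξ). Let a₁, b₁, a₂, b₂ ≥ 0 with a₁² + b₁² > 0, a₂² + b₂² > 0, and additionally a₁² + a₂² > 0. Suppose μ ∈ ℝ and φ : [0,π] → ℝ is twice continuously differentiable, not identically zero, satisfies φ''(ξ) + (μ − ϱ(ξ))φ(ξ) = 0 for all ξ ∈ [0,π], and satisfies a₁φ(0) − b₁φ'(0) = 0 and a₂φ(π) + b₂φ'(π) = 0. Then μ > ϱ₀ (the inequality is strict). -/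
/-!
Suppose `μ ≤ ϱ₀`. Then `φ φ'' = (ϱ - μ) φ² ≥ 0`, so `(φ φ')' = φ'² + φ φ'' ≥ 0` and `φ φ'` is
nondecreasing on `[0, π]`. The boundary conditions with nonnegative coefficients give
`φ φ' ≥ 0` at `0` and `φ φ' ≤ 0` at `π`, so `φ φ'` vanishes on `[0, π]`; hence so does `φ'²`,
and `φ` is a nonzero constant. Both boundary conditions then force `a₁ = a₂ = 0`.
-/

open Set

lemma mul_nonneg_of_mul_eq_mul {a b x y : ℝ} (ha : 0 ≤ a) (hb : 0 ≤ b) (hab : 0 < a ^ 2 + b ^ 2)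
    (h : a * x = b * y) : 0 ≤ x * y := by
  rcases hb.eq_or_lt with rfl | hb
  · have hx : x = 0 := by
      have : a ≠ 0 := by rintro rfl; norm_num at hab
      simpa [this] using h
    simp [hx]
  · have : b * (x * y) = a * x ^ 2 := by linear_combination x * h.symm
    exact nonneg_of_mul_nonneg_right (this ▸ by positivity) hb

section MulDeriv

variable {φ : ℝ → ℝ} {a b : ℝ}

lemma hasDerivAt_mul_deriv (hφ : ContDiff ℝ 2 φ) (x : ℝ) :
    HasDerivAt (fun x => φ x * deriv φ x) (deriv φ x ^ 2 + φ x * deriv (deriv φ) x) x := by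
  have hφ' : ContDiff ℝ 1 (deriv φ) := hφ.iterate_deriv' 1 1
  simpa only [sq] using (hφ.differentiable two_ne_zero x).hasDerivAt.fun_mul
    (hφ'.differentiable one_ne_zero x).hasDerivAt

lemma monotoneOn_mul_deriv (hφ : ContDiff ℝ 2 φ)
    (hconv : ∀ ξ ∈ Icc a b, 0 ≤ φ ξ * deriv (deriv φ) ξ) :
    MonotoneOn (fun x => φ x * deriv φ x) (Icc a b) := by
  refine monotoneOn_of_deriv_nonneg (convex_Icc a b)
    (fun x _ => (hasDerivAt_mul_deriv hφ x).continuousAt.continuousWithinAt)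
    (fun x _ => (hasDerivAt_mul_deriv hφ x).differentiableAt.differentiableWithinAt) ?_
  intro x hx
  rw [(hasDerivAt_mul_deriv hφ x).deriv]
  have := hconv x (interior_subset hx)
  positivity

lemma eqOn_deriv_zero_of_mul_deriv (hab : a < b) (hφ : ContDiff ℝ 2 φ)
    (hconv : ∀ ξ ∈ Icc a b, 0 ≤ φ ξ * deriv (deriv φ) ξ)
    (ha : 0 ≤ φ a * deriv φ a) (hb : φ b * deriv φ b ≤ 0) :
    EqOn (deriv φ) 0 (Icc a b) := by
  have hmono := monotoneOn_mul_deriv hφ hconv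
  have hvanish : ∀ ξ ∈ Icc a b, φ ξ * deriv φ ξ = 0 := fun ξ hξ =>
    le_antisymm ((hmono hξ (right_mem_Icc.2 hab.le) hξ.2).trans hb)
      (ha.trans (hmono (left_mem_Icc.2 hab.le) hξ hξ.1))
  have hIoo : EqOn (deriv φ) 0 (Ioo a b) := by
    intro ξ hξ
    have hlocal : (fun x => φ x * deriv φ x) =ᶠ[nhds ξ] fun _ => 0 := by
      filter_upwards [Ioo_mem_nhds hξ.1 hξ.2] with x hx using hvanish x (Ioo_subset_Icc_self hx)
    have hzero := (hasDerivAt_mul_deriv hφ ξ).unique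
      ((hasDerivAt_const ξ (0 : ℝ)).congr_of_eventuallyEq hlocal)
    have := hconv ξ (Ioo_subset_Icc_self hξ)
    exact pow_eq_zero_iff two_ne_zero |>.1 (by nlinarith [sq_nonneg (deriv φ ξ)])
  rw [← closure_Ioo hab.ne]
  exact hIoo.closure (hφ.continuous_deriv one_le_two) continuous_const

end MulDeriv

theorem stmt_1_general
    (ϱ : ℝ → ℝ)
    (ϱ₀ : ℝ) (hϱ₀ : IsLeast (ϱ '' Set.Icc 0 Real.pi) ϱ₀)
    (a₁ b₁ a₂ b₂ : ℝ) (ha₁ : 0 ≤ a₁) (hb₁ : 0 ≤ b₁) (ha₂ : 0 ≤ a₂) (hb₂ : 0 ≤ b₂)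
    (h1 : 0 < a₁ ^ 2 + b₁ ^ 2) (h2 : 0 < a₂ ^ 2 + b₂ ^ 2)
    (h3 : 0 < a₁ ^ 2 + a₂ ^ 2)
    (μ : ℝ) (φ : ℝ → ℝ) (hφ : ContDiff ℝ 2 φ)
    (hne : ∃ ξ ∈ Set.Icc 0 Real.pi, φ ξ ≠ 0)
    (hode : ∀ ξ ∈ Set.Icc 0 Real.pi, deriv (deriv φ) ξ + (μ - ϱ ξ) * φ ξ = 0)
    (hbc0 : a₁ * φ 0 - b₁ * deriv φ 0 = 0)
    (hbcπ : a₂ * φ Real.pi + b₂ * deriv φ Real.pi = 0) :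
    ϱ₀ < μ := by
  by_contra! hμ
  have hconv : ∀ ξ ∈ Icc 0 Real.pi, 0 ≤ φ ξ * deriv (deriv φ) ξ := fun ξ hξ => by
    have : μ ≤ ϱ ξ := hμ.trans (hϱ₀.2 ⟨ξ, hξ, rfl⟩)
    have : φ ξ * deriv (deriv φ) ξ = (ϱ ξ - μ) * φ ξ ^ 2 := by linear_combination φ ξ * hode ξ hξ
    rw [this]
    positivity
  have h0 : 0 ≤ φ 0 * deriv φ 0 := mul_nonneg_of_mul_eq_mul ha₁ hb₁ h1 (by linarith)
  have hπ : 0 ≤ φ Real.pi * -deriv φ Real.pi := mul_nonneg_of_mul_eq_mul ha₂ hb₂ h2 (by linarith)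
  have hφ' := eqOn_deriv_zero_of_mul_deriv Real.pi_pos hφ hconv h0 (by linarith)
  have hconst : ∀ ξ ∈ Icc 0 Real.pi, φ ξ = φ 0 :=
    constant_of_has_deriv_right_zero (hφ.continuous.continuousOn) fun x hx =>
      (hφ' (Ico_subset_Icc_self hx) ▸
        ((hφ.differentiable two_ne_zero x).hasDerivAt)).hasDerivWithinAt
  obtain ⟨ξ, hξ, hφξ⟩ := hne
  have hφ0 : φ 0 ≠ 0 := hconst ξ hξ ▸ hφξ
  have hφπ : φ Real.pi = φ 0 := hconst _ (right_mem_Icc.2 Real.pi_pos.le)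
  have ha₁0 : a₁ = 0 := by
    simpa [hφ' (left_mem_Icc.2 Real.pi_pos.le), hφ0] using hbc0
  have ha₂0 : a₂ = 0 := by
    simpa [hφ' (right_mem_Icc.2 Real.pi_pos.le), hφπ, hφ0] using hbcπ
  simp [ha₁0, ha₂0] at h3

/-- Lemma 6.2 (strict inequality): if moreover `a₁² + a₂² > 0`, then `μ > ϱ₀`. -/
theorem stmt_1
    (ϱ : ℝ → ℝ) (hϱ : ContinuousOn ϱ (Set.Icc 0 Real.pi))
    (ϱ₀ : ℝ) (hϱ₀ : IsLeast (ϱ '' Set.Icc 0 Real.pi) ϱ₀)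
    (a₁ b₁ a₂ b₂ : ℝ) (ha₁ : 0 ≤ a₁) (hb₁ : 0 ≤ b₁) (ha₂ : 0 ≤ a₂) (hb₂ : 0 ≤ b₂)
    (h1 : 0 < a₁ ^ 2 + b₁ ^ 2) (h2 : 0 < a₂ ^ 2 + b₂ ^ 2)
    (h3 : 0 < a₁ ^ 2 + a₂ ^ 2)
    (μ : ℝ) (φ : ℝ → ℝ) (hφ : ContDiff ℝ 2 φ)
    (hne : ∃ ξ ∈ Set.Icc 0 Real.pi, φ ξ ≠ 0)
    (hode : ∀ ξ ∈ Set.Icc 0 Real.pi, deriv (deriv φ) ξ + (μ - ϱ ξ) * φ ξ = 0)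
    (hbc0 : a₁ * φ 0 - b₁ * deriv φ 0 = 0)
    (hbcπ : a₂ * φ Real.pi + b₂ * deriv φ Real.pi = 0) :
    ϱ₀ < μ :=
  stmt_1_general ϱ ϱ₀ hϱ₀ a₁ b₁ a₂ b₂ ha₁ hb₁ ha₂ hb₂ h1 h2 h3 μ φ hφ hne hode hbc0 hbcπ
end

section
/- Let ϱ : [0,π] → ℝ be continuous with ϱ(ξ) > 0 for all ξ ∈ [0,π], and set ϱ₀ := min_{ξ∈[0,π]} ϱ(ξ) and ϱ₁ := (2/π)∫₀^π ϱ(ξ) dξ. Let n ≥ 1 be an integer, μ ∈ ℝ, and let φ : [0,π] → ℝ be twice continuously differentiable, not identically zero, satisfying φ''(ξ) + (μ − ϱ(ξ))φ(ξ) = 0 on [0,π] with Neumann boundary conditions φ'(0) = φ'(π) = 0, and suppose φ has exactly n zeros in the open interval (0,π), i.e. the set {ξ ∈ (0,π) : φ(ξ) = 0} has exactly n elements. Then n² + ϱ₀ ≤ μ ≤ n² + ϱ₁. -/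
/-!
For `ν > 0` write `ν φ = r sin θ`, `φ' = r cos θ` (the modified Prüfer angle). Where `φ ≠ 0`,
`θ' = ν (φ'² + q φ²) / (φ'² + ν² φ²)` for `q = μ - ϱ`, and between consecutive nodes `θ` runs
from `0` (at a zero of `φ`) or `π / 2` (at a zero of `φ'`) up to `π` or `π / 2`. Zeros of `φ` are
simple, because an energy estimate for `φ² + φ'²` forbids double zeros of a nontrivial solution.
Hence, for a Neumann solution with `n` interior zeros, `∫₀^π θ' = n π` for every `ν > 0`.

If `q ≤ ν²` then `q / ν ≤ θ' ≤ ν`. Taking `ν² = μ - ϱ₀` gives `n ≤ ν`, i.e. `n² + ϱ₀ ≤ μ`;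
taking `ν² = μ` gives `μ π - ∫ ϱ ≤ n π √μ ≤ π (n² + μ) / 2`, i.e. `μ ≤ n² + ϱ₁`.
-/

open Set Real Filter Topology intervalIntegral MeasureTheory

lemma eqOn_zero_of_abs_deriv_le_mul {E E' : ℝ → ℝ} {K α β ξ₀ : ℝ}
    (hE : ∀ x ∈ Icc α β, HasDerivAt E (E' x) x) (hbound : ∀ x ∈ Icc α β, |E' x| ≤ K * E x)
    (hξ₀ : ξ₀ ∈ Icc α β) (h0 : E ξ₀ = 0) : EqOn E 0 (Icc α β) := by
  have hderiv (s : ℝ) : ∀ x ∈ Icc α β,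
      HasDerivAt (fun x => exp (s * x) * E x) (exp (s * x) * (E' x + s * E x)) x := fun x hx =>
    (((hasDerivAt_id' x).const_mul s).exp.mul (hE x hx)).congr_deriv (by ring)
  have hcont (s : ℝ) : ContinuousOn (fun x => exp (s * x) * E x) (Icc α β) := fun x hx =>
    (hderiv s x hx).continuousAt.continuousWithinAt
  have hanti : AntitoneOn (fun x => exp (-K * x) * E x) (Icc α β) :=
    antitoneOn_of_hasDerivWithinAt_nonpos (convex_Icc α β) (hcont _)
      (fun x hx => (hderiv _ x (interior_subset hx)).hasDerivWithinAt) fun x hx =>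
        mul_nonpos_of_nonneg_of_nonpos (exp_pos _).le
          (by linarith [(abs_le.mp (hbound x (interior_subset hx))).2])
  have hmono : MonotoneOn (fun x => exp (K * x) * E x) (Icc α β) :=
    monotoneOn_of_hasDerivWithinAt_nonneg (convex_Icc α β) (hcont _)
      (fun x hx => (hderiv _ x (interior_subset hx)).hasDerivWithinAt) fun x hx =>
        mul_nonneg (exp_pos _).le (by linarith [(abs_le.mp (hbound x (interior_subset hx))).1])
  intro x hx
  rcases le_total ξ₀ x with h | h
  · have h1 := hanti hξ₀ hx h
    have h2 := hmono hξ₀ hx h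
    simp only [h0, mul_zero] at h1 h2
    exact le_antisymm (nonpos_of_mul_nonpos_right h1 (exp_pos _))
      (nonneg_of_mul_nonneg_right h2 (exp_pos _))
  · have h1 := hanti hx hξ₀ h
    have h2 := hmono hx hξ₀ h
    simp only [h0, mul_zero] at h1 h2
    exact le_antisymm (nonpos_of_mul_nonpos_right h2 (exp_pos _))
      (nonneg_of_mul_nonneg_right h1 (exp_pos _))

section SimpleZero

variable {φ : ℝ → ℝ} {c : ℝ}

lemma tendsto_deriv_div_slope (hφ : DifferentiableAt ℝ φ c) (hφ' : ContinuousAt (deriv φ) c)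
    (hd : deriv φ c ≠ 0) : Tendsto (fun x => deriv φ x / slope φ c x) (𝓝[≠] c) (𝓝 1) := by
  rw [← div_self hd]
  exact (hφ'.tendsto.mono_left nhdsWithin_le_nhds).div
    (hasDerivAt_iff_tendsto_slope.mp hφ.hasDerivAt) hd

lemma deriv_div_eq_deriv_div_slope_mul (hc : φ c = 0) {x : ℝ} (hx : x ≠ c) :
    deriv φ x / φ x = deriv φ x / slope φ c x * (x - c)⁻¹ := by
  have : x - c ≠ 0 := sub_ne_zero.mpr hx
  rw [slope_def_field, hc, sub_zero]
  field_simp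

lemma tendsto_deriv_div_nhdsGT (hφ : DifferentiableAt ℝ φ c) (hφ' : ContinuousAt (deriv φ) c)
    (hc : φ c = 0) (hd : deriv φ c ≠ 0) :
    Tendsto (fun x => deriv φ x / φ x) (𝓝[>] c) atTop := by
  have hsub : Tendsto (fun x => x - c) (𝓝[>] c) (𝓝[>] 0) :=
    tendsto_nhdsWithin_of_tendsto_nhds_of_eventually_within _
      ((continuous_sub_right c).tendsto' c 0 (sub_self c) |>.mono_left nhdsWithin_le_nhds)
      (eventually_nhdsWithin_of_forall fun x hx => mem_Ioi.mpr (sub_pos.mpr hx))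
  refine ((tendsto_deriv_div_slope hφ hφ' hd).mono_left (nhdsWithin_mono _ fun x hx => ne_of_gt hx)
    |>.pos_mul_atTop one_pos hsub.inv_tendsto_nhdsGT_zero).congr' ?_
  filter_upwards [self_mem_nhdsWithin] with x hx
  exact (deriv_div_eq_deriv_div_slope_mul hc (ne_of_gt hx)).symm

lemma tendsto_deriv_div_nhdsLT (hφ : DifferentiableAt ℝ φ c) (hφ' : ContinuousAt (deriv φ) c)
    (hc : φ c = 0) (hd : deriv φ c ≠ 0) :
    Tendsto (fun x => deriv φ x / φ x) (𝓝[<] c) atBot := by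
  have hsub : Tendsto (fun x => x - c) (𝓝[<] c) (𝓝[<] 0) :=
    tendsto_nhdsWithin_of_tendsto_nhds_of_eventually_within _
      ((continuous_sub_right c).tendsto' c 0 (sub_self c) |>.mono_left nhdsWithin_le_nhds)
      (eventually_nhdsWithin_of_forall fun x hx => mem_Iio.mpr (sub_neg.mpr hx))
  refine ((tendsto_deriv_div_slope hφ hφ' hd).mono_left (nhdsWithin_mono _ fun x hx => ne_of_lt hx)
    |>.pos_mul_atBot one_pos hsub.inv_tendsto_nhdsLT_zero).congr' ?_
  filter_upwards [self_mem_nhdsWithin] with x hx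
  exact (deriv_div_eq_deriv_div_slope_mul hc (ne_of_lt hx)).symm

end SimpleZero

section Prufer

variable {q φ : ℝ → ℝ} {ν α β c : ℝ}

theorem eqOn_zero_of_eq_zero_of_deriv_eq_zero (hφ : Differentiable ℝ φ)
    (hφ' : Differentiable ℝ (deriv φ)) (hq : ContinuousOn q (Icc α β))
    (hode : ∀ x ∈ Icc α β, deriv (deriv φ) x + q x * φ x = 0) {ξ₀ : ℝ} (hξ₀ : ξ₀ ∈ Icc α β)
    (h0 : φ ξ₀ = 0) (h1 : deriv φ ξ₀ = 0) : EqOn φ 0 (Icc α β) := by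
  obtain ⟨C, hC⟩ := isCompact_Icc.exists_bound_of_continuousOn hq
  have hbound (x : ℝ) (hx : x ∈ Icc α β) :
      |2 * φ x * deriv φ x + 2 * deriv φ x * deriv (deriv φ) x|
        ≤ (1 + C) * (φ x ^ 2 + deriv φ x ^ 2) := by
    have hφφ' : |2 * φ x * deriv φ x| ≤ φ x ^ 2 + deriv φ x ^ 2 := abs_le.mpr
      ⟨by nlinarith [sq_nonneg (φ x + deriv φ x)], by nlinarith [sq_nonneg (φ x - deriv φ x)]⟩
    have hq' : |1 - q x| ≤ 1 + C := (abs_sub _ _).trans (by simpa using hC x hx)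
    calc |2 * φ x * deriv φ x + 2 * deriv φ x * deriv (deriv φ) x|
        = |2 * φ x * deriv φ x| * |1 - q x| := by
          rw [← abs_mul, eq_neg_of_add_eq_zero_left (hode x hx)]; ring_nf
      _ ≤ (φ x ^ 2 + deriv φ x ^ 2) * (1 + C) :=
          mul_le_mul hφφ' hq' (abs_nonneg _) (by positivity)
      _ = _ := mul_comm _ _
  have hE := eqOn_zero_of_abs_deriv_le_mul (fun x _ =>
    (((hφ x).hasDerivAt.pow 2).add ((hφ' x).hasDerivAt.pow 2)).congr_deriv (by ring))
    hbound hξ₀ (by simp [h0, h1])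
  intro x hx
  have : φ x ^ 2 + deriv φ x ^ 2 = 0 := hE hx
  exact pow_eq_zero_iff two_ne_zero |>.mp (by nlinarith [sq_nonneg (φ x), sq_nonneg (deriv φ x)])

theorem ne_zero_or_deriv_ne_zero (hφ : Differentiable ℝ φ) (hφ' : Differentiable ℝ (deriv φ))
    (hq : ContinuousOn q (Icc α β)) (hode : ∀ x ∈ Icc α β, deriv (deriv φ) x + q x * φ x = 0)
    (hne : ∃ ξ ∈ Icc α β, φ ξ ≠ 0) {x : ℝ} (hx : x ∈ Icc α β) : φ x ≠ 0 ∨ deriv φ x ≠ 0 := by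
  obtain ⟨ξ, hξ, hφξ⟩ := hne
  by_contra! h
  exact hφξ (eqOn_zero_of_eq_zero_of_deriv_eq_zero hφ hφ' hq hode hx h.1 h.2 hξ)

/-- The modified Prüfer angle `θ = arccot (φ' / (ν φ)) ∈ (0, π)`, so that
`(ν φ, φ') = r (sin θ, cos θ)`. It is the continuous angle only modulo `π`: through a zero of `φ`
it drops from `π` to `0`, so there only its one-sided limits are used. -/
noncomputable def pruferAngle (φ : ℝ → ℝ) (ν x : ℝ) : ℝ := π / 2 - arctan (deriv φ x / (ν * φ x))

noncomputable def pruferRate (q φ : ℝ → ℝ) (ν x : ℝ) : ℝ :=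
  ν * (deriv φ x ^ 2 + q x * φ x ^ 2) / (deriv φ x ^ 2 + ν ^ 2 * φ x ^ 2)

/-- The limit of `pruferAngle φ ν` from the right at a node `c` (a zero of `φ` or of `φ'`);
the limit from the left is `π - pruferNodeAngle φ c`. -/
noncomputable def pruferNodeAngle (φ : ℝ → ℝ) (c : ℝ) : ℝ := if φ c = 0 then 0 else π / 2

lemma hasDerivAt_pruferAngle {x : ℝ} (hφ : DifferentiableAt ℝ φ x)
    (hφ' : DifferentiableAt ℝ (deriv φ) x) (hode : deriv (deriv φ) x + q x * φ x = 0)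
    (hν : ν ≠ 0) (hx : φ x ≠ 0) : HasDerivAt (pruferAngle φ ν) (pruferRate q φ ν x) x := by
  refine (((hφ'.hasDerivAt.div (hφ.hasDerivAt.const_mul ν) (mul_ne_zero hν hx)).arctan)
    |>.const_sub (π / 2)).congr_deriv ?_
  rw [eq_neg_of_add_eq_zero_left hode, pruferRate, Pi.div_apply]
  field_simp
  ring

lemma tendsto_pruferAngle_of_deriv_eq_zero (hφ : ContinuousAt φ c)
    (hφ' : ContinuousAt (deriv φ) c) (hν : ν ≠ 0) (hc : φ c ≠ 0) (hd : deriv φ c = 0) :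
    Tendsto (pruferAngle φ ν) (𝓝 c) (𝓝 (π / 2)) := by
  have : ContinuousAt (pruferAngle φ ν) c :=
    continuousAt_const.sub <| continuous_arctan.continuousAt.comp <|
      hφ'.div (continuousAt_const.mul hφ) (mul_ne_zero hν hc)
  simpa [pruferAngle, hd] using this.tendsto

lemma tendsto_pruferAngle_nhdsGT (hφ : DifferentiableAt ℝ φ c) (hφ' : ContinuousAt (deriv φ) c)
    (hν : 0 < ν) (hnode : φ c = 0 ∨ deriv φ c = 0) (hnd : φ c ≠ 0 ∨ deriv φ c ≠ 0) :
    Tendsto (pruferAngle φ ν) (𝓝[>] c) (𝓝 (pruferNodeAngle φ c)) := by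
  by_cases hc : φ c = 0
  · have hcot : Tendsto (fun x => deriv φ x / (ν * φ x)) (𝓝[>] c) atTop := by
      simpa only [mul_comm ν, ← div_div] using
        (tendsto_deriv_div_nhdsGT hφ hφ' hc (hnd.resolve_left (not_not.mpr hc))).atTop_div_const hν
    rw [pruferNodeAngle, if_pos hc, ← sub_self (π / 2)]
    exact ((tendsto_arctan_atTop.mono_right nhdsWithin_le_nhds).comp hcot).const_sub (π / 2)
  · simpa [pruferNodeAngle, hc] using (tendsto_pruferAngle_of_deriv_eq_zero hφ.continuousAt hφ'
      hν.ne' hc (hnode.resolve_left hc)).mono_left nhdsWithin_le_nhds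

lemma tendsto_pruferAngle_nhdsLT (hφ : DifferentiableAt ℝ φ c) (hφ' : ContinuousAt (deriv φ) c)
    (hν : 0 < ν) (hnode : φ c = 0 ∨ deriv φ c = 0) (hnd : φ c ≠ 0 ∨ deriv φ c ≠ 0) :
    Tendsto (pruferAngle φ ν) (𝓝[<] c) (𝓝 (π - pruferNodeAngle φ c)) := by
  by_cases hc : φ c = 0
  · have hcot : Tendsto (fun x => deriv φ x / (ν * φ x)) (𝓝[<] c) atBot := by
      simpa only [mul_comm ν, ← div_div] using
        (tendsto_deriv_div_nhdsLT hφ hφ' hc (hnd.resolve_left (not_not.mpr hc))).atBot_div_const hν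
    rw [pruferNodeAngle, if_pos hc, sub_zero, show π = π / 2 - -(π / 2) by ring]
    exact ((tendsto_arctan_atBot.mono_right nhdsWithin_le_nhds).comp hcot).const_sub (π / 2)
  · have : π - π / 2 = π / 2 := by ring
    simpa [pruferNodeAngle, hc, this] using (tendsto_pruferAngle_of_deriv_eq_zero hφ.continuousAt
      hφ' hν.ne' hc (hnode.resolve_left hc)).mono_left nhdsWithin_le_nhds

lemma continuousOn_pruferRate {s : Set ℝ} (hφ : Continuous φ) (hφ' : Continuous (deriv φ))
    (hq : ContinuousOn q s) (hν : ν ≠ 0) (hnd : ∀ x ∈ s, φ x ≠ 0 ∨ deriv φ x ≠ 0) :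
    ContinuousOn (pruferRate q φ ν) s := by
  unfold pruferRate
  refine ContinuousOn.div (by fun_prop) (by fun_prop) fun x hx => ?_
  rcases hnd x hx with h | h <;> positivity

lemma integral_pruferRate_of_forall_ne_zero {a b : ℝ} (hφ : Differentiable ℝ φ)
    (hφ' : Differentiable ℝ (deriv φ)) (hq : ContinuousOn q (Icc a b))
    (hode : ∀ x ∈ Icc a b, deriv (deriv φ) x + q x * φ x = 0)
    (hnd : ∀ x ∈ Icc a b, φ x ≠ 0 ∨ deriv φ x ≠ 0) (hν : 0 < ν) (hab : a < b)
    (hmid : ∀ x ∈ Ioo a b, φ x ≠ 0) (ha : φ a = 0 ∨ deriv φ a = 0)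
    (hb : φ b = 0 ∨ deriv φ b = 0) :
    ∫ x in a..b, pruferRate q φ ν x = π - pruferNodeAngle φ b - pruferNodeAngle φ a :=
  integral_eq_sub_of_hasDerivAt_of_tendsto hab
    (fun x hx => hasDerivAt_pruferAngle (hφ x) (hφ' x) (hode x (Ioo_subset_Icc_self hx)) hν.ne'
      (hmid x hx))
    ((continuousOn_pruferRate hφ.continuous hφ'.continuous hq hν.ne' hnd).intervalIntegrable_of_Icc
      hab.le)
    (tendsto_pruferAngle_nhdsGT (hφ a) hφ'.continuous.continuousAt hν ha
      (hnd a (left_mem_Icc.mpr hab.le)))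
    (tendsto_pruferAngle_nhdsLT (hφ b) hφ'.continuous.continuousAt hν hb
      (hnd b (right_mem_Icc.mpr hab.le)))

lemma integral_pruferRate_eq_of_encard (hφ : Differentiable ℝ φ)
    (hφ' : Differentiable ℝ (deriv φ)) (hq : ContinuousOn q (Icc α β))
    (hode : ∀ x ∈ Icc α β, deriv (deriv φ) x + q x * φ x = 0)
    (hnd : ∀ x ∈ Icc α β, φ x ≠ 0 ∨ deriv φ x ≠ 0) (hν : 0 < ν) (hβ : deriv φ β = 0) (m : ℕ)
    {a : ℝ} (ha : a ∈ Ico α β) (hnode : φ a = 0 ∨ deriv φ a = 0)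
    (hcard : {x ∈ Ioo a β | φ x = 0}.encard = m) :
    ∫ x in a..β, pruferRate q φ ν x = (m + 1 / 2) * π - pruferNodeAngle φ a := by
  have hnodeβ : pruferNodeAngle φ β = π / 2 :=
    if_neg ((hnd β ⟨ha.1.trans ha.2.le, le_rfl⟩).resolve_right (not_not.mpr hβ))
  have hpiece {a b : ℝ} (ha : α ≤ a) (hab : a < b) (hb : b ≤ β) :=
    integral_pruferRate_of_forall_ne_zero (ν := ν) hφ hφ' (hq.mono (Icc_subset_Icc ha hb))
      (fun x hx => hode x (Icc_subset_Icc ha hb hx)) (fun x hx => hnd x (Icc_subset_Icc ha hb hx))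
      hν hab
  have hint {a b : ℝ} (ha : a ∈ Icc α β) (hb : b ∈ Icc α β) :
      IntervalIntegrable (pruferRate q φ ν) volume a b :=
    ((continuousOn_pruferRate hφ.continuous hφ'.continuous hq hν.ne' hnd).mono
      (uIcc_subset_Icc ha hb)).intervalIntegrable
  induction m generalizing a with
  | zero =>
    have hempty : {x ∈ Ioo a β | φ x = 0} = ∅ := encard_eq_zero.mp (by exact_mod_cast hcard)
    have hmid : ∀ x ∈ Ioo a β, φ x ≠ 0 := fun x hx h0 => hempty.subset ⟨hx, h0⟩
    rw [hpiece ha.1 ha.2 le_rfl hmid hnode (Or.inr hβ), hnodeβ]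
    push_cast
    ring
  | succ m ih =>
    obtain ⟨b, ⟨hb, hφb⟩, hbmin⟩ := exists_min_image _ id (finite_of_encard_eq_coe hcard)
      (nonempty_of_encard_ne_zero (by rw [hcard]; simp))
    have hmid : ∀ x ∈ Ioo a b, φ x ≠ 0 := fun x hx h0 =>
      (hbmin x ⟨⟨hx.1, hx.2.trans hb.2⟩, h0⟩).not_gt hx.2
    have hrest : {x ∈ Ioo b β | φ x = 0} = {x ∈ Ioo a β | φ x = 0} \ {b} := by
      ext x
      simp only [Set.mem_sdiff, mem_ofPred_eq, mem_Ioo, mem_singleton_iff]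
      constructor
      · rintro ⟨⟨hbx, hxβ⟩, h0⟩
        exact ⟨⟨⟨hb.1.trans hbx, hxβ⟩, h0⟩, hbx.ne'⟩
      · rintro ⟨⟨⟨hax, hxβ⟩, h0⟩, hxb⟩
        exact ⟨⟨(hbmin x ⟨⟨hax, hxβ⟩, h0⟩).lt_of_ne' hxb, hxβ⟩, h0⟩
    have hcard' : {x ∈ Ioo b β | φ x = 0}.encard = m := by
      have hbs : b ∈ {x ∈ Ioo a β | φ x = 0} := ⟨hb, hφb⟩
      rw [hrest, encard_sdiff_singleton_of_mem hbs, hcard]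
      norm_cast
    have hbI : b ∈ Icc α β := ⟨ha.1.trans hb.1.le, hb.2.le⟩
    rw [← integral_add_adjacent_intervals (hint (Ico_subset_Icc_self ha) hbI)
        (hint hbI (right_mem_Icc.mpr (ha.1.trans ha.2.le))),
      hpiece ha.1 hb.1 hb.2.le hmid hnode (Or.inl hφb),
      ih ⟨hbI.1, hb.2⟩ (Or.inl hφb) hcard']
    simp only [pruferNodeAngle, if_pos hφb]
    push_cast
    ring

theorem integral_pruferRate_eq_mul_pi (hφ : Differentiable ℝ φ)
    (hφ' : Differentiable ℝ (deriv φ)) (hq : ContinuousOn q (Icc α β))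
    (hode : ∀ x ∈ Icc α β, deriv (deriv φ) x + q x * φ x = 0)
    (hnd : ∀ x ∈ Icc α β, φ x ≠ 0 ∨ deriv φ x ≠ 0) (hν : 0 < ν) (hαβ : α < β)
    (hα : deriv φ α = 0) (hβ : deriv φ β = 0) {n : ℕ}
    (hzeros : {x ∈ Ioo α β | φ x = 0}.encard = n) :
    ∫ x in α..β, pruferRate q φ ν x = n * π := by
  rw [integral_pruferRate_eq_of_encard hφ hφ' hq hode hnd hν hβ n ⟨le_rfl, hαβ⟩ (Or.inr hα)
    hzeros, pruferNodeAngle,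
    if_neg ((hnd α (left_mem_Icc.mpr hαβ.le)).resolve_right (not_not.mpr hα))]
  ring

lemma pruferRate_le {x : ℝ} (hν : 0 < ν) (hqx : q x ≤ ν ^ 2)
    (hnd : φ x ≠ 0 ∨ deriv φ x ≠ 0) : pruferRate q φ ν x ≤ ν := by
  rw [pruferRate, div_le_iff₀ (by rcases hnd with h | h <;> positivity)]
  nlinarith [mul_nonneg (mul_nonneg hν.le (sub_nonneg.mpr hqx)) (sq_nonneg (φ x))]

lemma div_le_pruferRate {x : ℝ} (hν : 0 < ν) (hqx : q x ≤ ν ^ 2)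
    (hnd : φ x ≠ 0 ∨ deriv φ x ≠ 0) : q x / ν ≤ pruferRate q φ ν x := by
  rw [pruferRate, div_le_div_iff₀ hν (by rcases hnd with h | h <;> positivity)]
  nlinarith [mul_nonneg (sub_nonneg.mpr hqx) (sq_nonneg (deriv φ x))]

lemma integral_pruferRate_le (hφ : Continuous φ) (hφ' : Continuous (deriv φ))
    (hq : ContinuousOn q (Icc α β)) (hnd : ∀ x ∈ Icc α β, φ x ≠ 0 ∨ deriv φ x ≠ 0) (hν : 0 < ν)
    (hαβ : α ≤ β) (hqν : ∀ x ∈ Icc α β, q x ≤ ν ^ 2) :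
    ∫ x in α..β, pruferRate q φ ν x ≤ ν * (β - α) := by
  calc ∫ x in α..β, pruferRate q φ ν x ≤ ∫ _ in α..β, ν :=
        integral_mono_on hαβ
          ((continuousOn_pruferRate hφ hφ' hq hν.ne' hnd).intervalIntegrable_of_Icc hαβ)
          intervalIntegrable_const fun x hx => pruferRate_le hν (hqν x hx) (hnd x hx)
    _ = ν * (β - α) := by rw [intervalIntegral.integral_const, smul_eq_mul, mul_comm]

lemma integral_div_le_integral_pruferRate (hφ : Continuous φ) (hφ' : Continuous (deriv φ))
    (hq : ContinuousOn q (Icc α β)) (hnd : ∀ x ∈ Icc α β, φ x ≠ 0 ∨ deriv φ x ≠ 0) (hν : 0 < ν)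
    (hαβ : α ≤ β) (hqν : ∀ x ∈ Icc α β, q x ≤ ν ^ 2) :
    ∫ x in α..β, q x / ν ≤ ∫ x in α..β, pruferRate q φ ν x :=
  integral_mono_on hαβ ((hq.div_const ν).intervalIntegrable_of_Icc hαβ)
    ((continuousOn_pruferRate hφ hφ' hq hν.ne' hnd).intervalIntegrable_of_Icc hαβ)
    fun x hx => div_le_pruferRate hν (hqν x hx) (hnd x hx)

lemma natCast_sq_le_of_integral_pruferRate_eq {n : ℕ} (hn : 1 ≤ n)
    (hφ : Continuous φ) (hφ' : Continuous (deriv φ)) (hq : ContinuousOn q (Icc 0 π))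
    (hnd : ∀ x ∈ Icc 0 π, φ x ≠ 0 ∨ deriv φ x ≠ 0)
    (hwind : ∀ ν, 0 < ν → ∫ x in 0..π, pruferRate q φ ν x = n * π)
    (hqc : ∀ x ∈ Icc 0 π, q x ≤ c) : (n : ℝ) ^ 2 ≤ c := by
  -- capping `c` below by `1 / 4 < n ^ 2` keeps `ν` positive and costs nothing
  have hc : 0 < max c (1 / 4) := lt_max_of_lt_right (by norm_num)
  set ν := √(max c (1 / 4))
  have hν : 0 < ν := sqrt_pos.mpr hc
  have hνsq : ν ^ 2 = max c (1 / 4) := sq_sqrt hc.le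
  have hnν : (n : ℝ) ≤ ν := by
    have := integral_pruferRate_le hφ hφ' hq hnd hν pi_pos.le fun x hx =>
      hνsq ▸ le_max_of_le_left (hqc x hx)
    rw [hwind ν hν, sub_zero] at this
    exact le_of_mul_le_mul_right this pi_pos
  have hn' : (1 : ℝ) ≤ n := by exact_mod_cast hn
  rcases le_max_iff.mp (hνsq ▸ pow_le_pow_left₀ n.cast_nonneg hnν 2) with h | h
  · exact h
  · nlinarith

lemma integral_le_of_integral_pruferRate_eq {n : ℕ} (hφ : Continuous φ)
    (hφ' : Continuous (deriv φ)) (hq : ContinuousOn q (Icc 0 π))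
    (hnd : ∀ x ∈ Icc 0 π, φ x ≠ 0 ∨ deriv φ x ≠ 0) (hν : 0 < ν)
    (hwind : ∫ x in 0..π, pruferRate q φ ν x = n * π) (hqν : ∀ x ∈ Icc 0 π, q x ≤ ν ^ 2) :
    ∫ x in 0..π, q x ≤ n * π * ν := by
  have := (integral_div_le_integral_pruferRate hφ hφ' hq hnd hν pi_pos.le hqν).trans_eq hwind
  rwa [intervalIntegral.integral_div, div_le_iff₀ hν] at this

end Prufer

/-- Two-sided eigenvalue bound (6.31) for the Neumann Sturm–Liouville problem:
if `φ'' + (μ − ϱ)φ = 0`, `φ'(0) = φ'(π) = 0`, and `φ` has exactly `n ≥ 1` zeros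
in `(0,π)`, then `n² + ϱ₀ ≤ μ ≤ n² + ϱ₁`. -/
theorem stmt_2
    (ϱ : ℝ → ℝ) (hϱ : ContinuousOn ϱ (Set.Icc 0 Real.pi))
    (hϱpos : ∀ ξ ∈ Set.Icc 0 Real.pi, 0 < ϱ ξ)
    (ϱ₀ ϱ₁ : ℝ) (hϱ₀ : IsLeast (ϱ '' Set.Icc 0 Real.pi) ϱ₀)
    (hϱ₁ : ϱ₁ = (2 / Real.pi) * ∫ ξ in (0:ℝ)..Real.pi, ϱ ξ)
    (n : ℕ) (hn : 1 ≤ n) (μ : ℝ) (φ : ℝ → ℝ) (hφ : ContDiff ℝ 2 φ)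
    (hne : ∃ ξ ∈ Set.Icc 0 Real.pi, φ ξ ≠ 0)
    (hode : ∀ ξ ∈ Set.Icc 0 Real.pi, deriv (deriv φ) ξ + (μ - ϱ ξ) * φ ξ = 0)
    (hbc0 : deriv φ 0 = 0) (hbcπ : deriv φ Real.pi = 0)
    (hzeros : {ξ ∈ Set.Ioo 0 Real.pi | φ ξ = 0}.encard = n) :
    (n : ℝ) ^ 2 + ϱ₀ ≤ μ ∧ μ ≤ (n : ℝ) ^ 2 + ϱ₁ := by
  have hφ₁ : Differentiable ℝ φ := hφ.differentiable two_ne_zero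
  have hφ₂ : Differentiable ℝ (deriv φ) := hφ.differentiable_deriv_two
  have hq : ContinuousOn (fun x => μ - ϱ x) (Icc 0 π) := continuousOn_const.sub hϱ
  have hnd (x : ℝ) (hx : x ∈ Icc 0 π) := ne_zero_or_deriv_ne_zero hφ₁ hφ₂ hq hode hne hx
  have hwind (ν : ℝ) (hν : 0 < ν) :=
    integral_pruferRate_eq_mul_pi hφ₁ hφ₂ hq hode hnd hν pi_pos hbc0 hbcπ hzeros
  obtain ⟨⟨ξ₀, hξ₀, rfl⟩, hϱ₀le⟩ := hϱ₀
  have hlow := natCast_sq_le_of_integral_pruferRate_eq hn hφ₁.continuous hφ₂.continuous hq hnd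
    hwind (c := μ - ϱ ξ₀) fun x hx => by linarith [hϱ₀le ⟨x, hx, rfl⟩]
  refine ⟨by linarith, ?_⟩
  have hμ : 0 < μ := by nlinarith [hϱpos ξ₀ hξ₀]
  have hupper := integral_le_of_integral_pruferRate_eq hφ₁.continuous hφ₂.continuous hq hnd
    (sqrt_pos.mpr hμ) (hwind _ (sqrt_pos.mpr hμ)) fun x hx => by
      rw [sq_sqrt hμ.le]; linarith [hϱpos x hx]
  rw [integral_sub intervalIntegrable_const (hϱ.intervalIntegrable_of_Icc pi_pos.le),
    intervalIntegral.integral_const, smul_eq_mul, sub_zero] at hupper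
  have hamgm : 2 * n * √μ ≤ n ^ 2 + μ := by nlinarith [sq_sqrt hμ.le, sq_nonneg (√μ - n)]
  rw [hϱ₁, div_mul_eq_mul_div, ← sub_le_iff_le_add', le_div_iff₀ pi_pos]
  nlinarith [mul_le_mul_of_nonneg_left hamgm pi_pos.le]
end

section
/- Let τ ∈ (1,2), γ ∈ (0,1), and set ς := (2−τ)/τ ∈ (0,1) and σ := (τ−1)/ς = τ(τ−1)/(2−τ). Let c > 0, M > 0, 𝔑 > 0, let ω > γ, and let N ≥ 1 be an integer. Let (λ_j)_{j∈ℕ} be a sequence of positive real numbers with λ_j → +∞, and for each l ∈ {1,…,N} set ϖ_l := min_{j∈ℕ} |ω²l² − λ_j|, attained at some index j*(l). Assume: (i) |ωl − √λ_j| > γ/l^τ for all l ∈ {1,…,N} and all j ∈ ℕ; (ii) |ωl − j/c| > γ/l^τ for all l ∈ {1,…,N} and all j ∈ ℕ; (iii) for every l ∈ {1,…,N}, j*(l) ≥ 𝔑·ω·l and |√λ_{j*(l)} − j*(l)/c| ≤ M/j*(l). Then there exists a constant L > 0, depending only on τ and on M/𝔑, such that for all k, l ∈ {1,…,N} with k ≠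 l: 1/√(ϖ_l · ϖ_k) ≤ |k−l|^σ/(L·γ³·ω); equivalently ϖ_l·ϖ_k ≥ L²γ⁶ω²·|k−l|^{−2σ}. -/
/-!
For `a < b` write `ϖ_i = |ωi − √λ_{j*(i)}| (ωi + √λ_{j*(i)})`. The first Melnikov condition
gives `ϖ_i ≥ γω i^{1−τ}`, and the asymptotics of `λ_{j*}` put `ωi` within `(ϖ_i + r)/(ωi)` of
`j*(i)/c`. Applying the second Melnikov condition at `d = b − a` to the integer
`j*(b) − j*(a)` therefore gives `γ/d^τ < (ϖ_b + r)/(ωb) + (ϖ_a + r)/(ωa)`.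

Let `q = τ/(2−τ)`, so that `q(τ − 1) = σ`. If `a ≤ (1 + 4r/γ²) d^q`, then `a` and `b` are at
most `X = (4r + 2) d^q/γ²`, and `ϖ_a, ϖ_b ≥ γω X^{1−τ}`, whose powers of `d` cancel against
`d^σ`. Otherwise `a > d^q`, so `a^{2−τ} > d^τ` and `b ≤ 2a`, and the `r`-terms are negligible:
the sum condition forces `ϖ_a + ϖ_b ≳ γωa/d^τ`, and the larger divisor compensates the smaller.
-/

open Real

section Divisors

variable {x lam γ τ ω i c j M 𝔑 : ℝ}

lemma abs_sq_sub_eq_abs_sub_sqrt_mul (hx : 0 ≤ x) (hlam : 0 ≤ lam) :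
    |x ^ 2 - lam| = |x - √lam| * (x + √lam) := by
  rw [← abs_of_nonneg (add_nonneg hx (sqrt_nonneg lam)), ← abs_mul]
  congr 1
  nth_rewrite 1 [← sq_sqrt hlam]
  ring

lemma mul_le_abs_sq_sub {δ : ℝ} (hx : 0 ≤ x) (hlam : 0 ≤ lam) (h : δ ≤ |x - √lam|) :
    δ * x ≤ |x ^ 2 - lam| := by
  rw [abs_sq_sub_eq_abs_sub_sqrt_mul hx hlam]
  exact mul_le_mul h (le_add_of_nonneg_right (sqrt_nonneg lam)) hx (abs_nonneg _)

lemma abs_sub_sqrt_le_abs_sq_sub_div (hx : 0 < x) (hlam : 0 ≤ lam) :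
    |x - √lam| ≤ |x ^ 2 - lam| / x := by
  rw [le_div_iff₀ hx]
  exact mul_le_abs_sq_sub hx.le hlam le_rfl

lemma mul_rpow_one_sub_le_abs_sq_sub (hω : 0 < ω) (hi : 0 < i) (hlam : 0 ≤ lam)
    (h : γ / i ^ τ < |ω * i - √lam|) :
    γ * ω * i ^ (1 - τ) ≤ |ω ^ 2 * i ^ 2 - lam| := by
  have key := mul_le_abs_sq_sub (mul_pos hω hi).le hlam h.le
  rw [mul_pow] at key
  convert key using 1
  rw [rpow_sub hi, rpow_one]
  field_simp

lemma abs_mul_sub_div_le (hω : 0 < ω) (hi : 0 < i) (hlam : 0 ≤ lam) (h𝔑 : 0 < 𝔑)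
    (hM : 0 ≤ M) (hj : 𝔑 * ω * i ≤ j) (hasym : |√lam - j / c| ≤ M / j) :
    |ω * i - j / c| ≤ (|ω ^ 2 * i ^ 2 - lam| + M / 𝔑) / (ω * i) := by
  have hωi : 0 < ω * i := mul_pos hω hi
  have hasym' : |√lam - j / c| ≤ M / 𝔑 / (ω * i) := by
    rw [div_div, ← mul_assoc]
    exact hasym.trans (div_le_div_of_nonneg_left hM (by positivity) hj)
  calc |ω * i - j / c| ≤ |ω * i - √lam| + |√lam - j / c| := abs_sub_le _ _ _
    _ ≤ |ω ^ 2 * i ^ 2 - lam| / (ω * i) + M / 𝔑 / (ω * i) := by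
      rw [← mul_pow]
      exact add_le_add (abs_sub_sqrt_le_abs_sq_sub_div hωi hlam) hasym'
    _ = _ := by rw [add_div]

end Divisors

section Melnikov

variable {γ τ ω c : ℝ}

lemma lt_abs_mul_sub_intCast_div (hγ : 0 < γ) (hγω : γ < ω) (hc : 0 < c) (hτ : 0 ≤ τ)
    {n : ℝ} (hn : 1 ≤ n) (h : ∀ j : ℕ, γ / n ^ τ < |ω * n - j / c|) (j : ℤ) :
    γ / n ^ τ < |ω * n - j / c| := by
  obtain ⟨j, rfl | rfl⟩ := Int.eq_nat_or_neg j
  · exact_mod_cast h j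
  · have hjc : 0 ≤ (j : ℝ) / c := by positivity
    calc γ / n ^ τ ≤ γ := div_le_self hγ.le (one_le_rpow hn hτ)
      _ < ω * n + j / c := by nlinarith
      _ ≤ |ω * n + j / c| := le_abs_self _
      _ = _ := by push_cast; ring_nf

lemma lt_abs_add_abs_of_melnikov (hγ : 0 < γ) (hγω : γ < ω) (hc : 0 < c) (hτ : 0 ≤ τ)
    {a b : ℕ} (hab : a < b)
    (h : ∀ j : ℕ, γ / ((b - a : ℕ) : ℝ) ^ τ < |ω * (b - a : ℕ) - j / c|) (ja jb : ℕ) :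
    γ / ((b : ℝ) - a) ^ τ < |ω * b - jb / c| + |ω * a - ja / c| := by
  have hn : (1 : ℝ) ≤ (b : ℝ) - a := by
    rw [le_sub_iff_add_le']; exact_mod_cast hab
  rw [Nat.cast_sub hab.le] at h
  calc γ / ((b : ℝ) - a) ^ τ < |ω * ((b : ℝ) - a) - ((jb - ja : ℤ) : ℝ) / c| :=
        lt_abs_mul_sub_intCast_div hγ hγω hc hτ hn h _
    _ = |(ω * b - jb / c) - (ω * a - ja / c)| := by push_cast; ring_nf
    _ ≤ _ := abs_sub _ _

end Melnikov

section ProductBound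

variable {τ γ ω r a b wa wb : ℝ}

lemma mul_le_mul_of_two_mul_le_add {m S x y : ℝ} (hm : 0 ≤ m) (hx : m ≤ x) (hy : m ≤ y)
    (hS : 2 * S ≤ x + y) : m * S ≤ x * y := by
  rcases le_total S x with h | h <;> nlinarith

lemma mul_rpow_le_of_le {κ t X w : ℝ} (hτ : 1 ≤ τ) (hκ : 0 ≤ κ) (ht : 0 < t) (htX : t ≤ X)
    (hw : κ * t ^ (1 - τ) ≤ w) : κ * X ^ (1 - τ) ≤ w :=
  (mul_le_mul_of_nonneg_left (rpow_le_rpow_of_nonpos ht htX (by linarith)) hκ).trans hw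

lemma mul_rpow_mul_rpow_neg_mul {C d : ℝ} (hC : 0 ≤ C) (hd : 0 < d) (p q : ℝ) :
    (C * d ^ q) ^ p * d ^ (-(q * p)) = C ^ p := by
  rw [mul_rpow hC (rpow_nonneg hd.le q), ← rpow_mul hd.le, mul_assoc, ← rpow_add hd,
    add_neg_cancel, rpow_zero, mul_one]

lemma divisor_product_bound_small (hτ1 : 1 < τ) (hτ2 : τ < 2) (hγ0 : 0 < γ) (hγ1 : γ < 1)
    (hω : 0 < ω) (hr : 0 ≤ r) (ha : 0 < a) (hab : 1 ≤ b - a)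
    (hsmall : a ≤ (γ ^ 2 + 4 * r) * (b - a) ^ (τ / (2 - τ)) / γ ^ 2)
    (hwa : γ * ω * a ^ (1 - τ) ≤ wa) (hwb : γ * ω * b ^ (1 - τ) ≤ wb) :
    (1 / (8 * (r + 1)) * γ ^ 3 * ω) ^ 2 ≤
      wa * wb * ((b - a) ^ (τ * (τ - 1) / (2 - τ))) ^ 2 := by
  set d := b - a
  set q := τ / (2 - τ)
  set C := (4 * r + 2) / γ ^ 2
  have hγ2 : 0 < γ ^ 2 := by positivity
  have hC0 : 0 < C := div_pos (by linarith) hγ2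
  have hγ21 : γ ^ 2 ≤ 1 := pow_le_one₀ hγ0.le hγ1.le
  have hdq : d ≤ d ^ q :=
    self_le_rpow_of_one_le hab (by rw [le_div_iff₀ (by linarith)]; linarith)
  have hdqγ : d ^ q ≤ d ^ q / γ ^ 2 := le_div_self (by positivity) hγ2 hγ21
  have hbX : b ≤ C * d ^ q := by
    have : C * d ^ q = (γ ^ 2 + 4 * r) * d ^ q / γ ^ 2 + (2 - γ ^ 2) * (d ^ q / γ ^ 2) := by
      simp only [C]; field_simp; ring
    nlinarith
  have hκ : 0 ≤ γ * ω := by positivity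
  have hprod : (γ * ω * (C * d ^ q) ^ (1 - τ)) ^ 2 ≤ wa * wb := by
    rw [sq]
    exact mul_le_mul (mul_rpow_le_of_le hτ1.le hκ ha (by linarith) hwa)
      (mul_rpow_le_of_le hτ1.le hκ (by linarith) hbX hwb) (by positivity)
      ((by positivity : (0 : ℝ) ≤ γ * ω * a ^ (1 - τ)).trans hwa)
  have hC : γ ^ 2 / (4 * r + 2) ≤ C ^ (1 - τ) := by
    have h := rpow_le_rpow_of_exponent_le (by rw [le_div_iff₀ hγ2]; linarith : 1 ≤ C)
      (by linarith : (-1 : ℝ) ≤ 1 - τ)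
    rwa [rpow_neg_one, inv_div] at h
  have hL : 1 / (8 * (r + 1)) * γ ^ 3 * ω ≤ γ * ω * C ^ (1 - τ) :=
    calc 1 / (8 * (r + 1)) * γ ^ 3 * ω ≤ 1 / (4 * r + 2) * γ ^ 3 * ω := by
          gcongr; linarith
      _ = γ * ω * (γ ^ 2 / (4 * r + 2)) := by ring
      _ ≤ γ * ω * C ^ (1 - τ) := mul_le_mul_of_nonneg_left hC hκ
  have hσ : τ * (τ - 1) / (2 - τ) = -(q * (1 - τ)) := by
    simp only [q]; field_simp; ring
  calc (1 / (8 * (r + 1)) * γ ^ 3 * ω) ^ 2 ≤ (γ * ω * C ^ (1 - τ)) ^ 2 :=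
        pow_le_pow_left₀ (by positivity) hL 2
    _ = (γ * ω * (C * d ^ q) ^ (1 - τ)) ^ 2 * (d ^ (τ * (τ - 1) / (2 - τ))) ^ 2 := by
        rw [hσ, ← mul_rpow_mul_rpow_neg_mul hC0.le (by linarith : 0 < d) (1 - τ) q]; ring
    _ ≤ _ := mul_le_mul_of_nonneg_right hprod (sq_nonneg _)

lemma sq_mul_sq_div_eight_le_mul (hτ1 : 1 < τ) (hτ2 : τ < 2) (hγ0 : 0 < γ) (hγω : γ < ω)
    (hr : 0 ≤ r) (ha : 0 < a) (hab : a < b) (hba : b ≤ 2 * a)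
    (hda : (b - a) ^ τ ≤ a ^ (2 - τ)) (hra : 4 * r * (b - a) ^ τ < γ ^ 2 * a)
    (hwa : γ * ω * a ^ (1 - τ) ≤ wa) (hwb : γ * ω * b ^ (1 - τ) ≤ wb)
    (hsum : γ / (b - a) ^ τ < (wb + r) / (ω * b) + (wa + r) / (ω * a)) :
    γ ^ 2 * ω ^ 2 / 8 ≤ wa * wb := by
  set D := (b - a) ^ τ
  have hD : 0 < D := rpow_pos_of_pos (by linarith) τ
  have hω : 0 < ω := hγ0.trans hγω
  have hb : 0 < b := by linarith
  have hκ : 0 ≤ γ * ω := by positivity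
  have hwb0 : 0 ≤ wb := (by positivity : (0 : ℝ) ≤ γ * ω * b ^ (1 - τ)).trans hwb
  have hsum' : γ * ω * a / D < wa + wb + 2 * r := by
    have hωb : (wb + r) / (ω * b) ≤ (wb + r) / (ω * a) :=
      div_le_div_of_nonneg_left (by linarith) (by positivity) (by nlinarith)
    have h := hsum.trans_le (add_le_add_left hωb _)
    rw [← add_div, div_lt_div_iff₀ hD (by positivity)] at h
    rw [div_lt_iff₀ hD]
    nlinarith
  have hr' : 2 * r ≤ γ * ω * a / (2 * D) := by
    rw [le_div_iff₀ (by positivity)]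
    nlinarith [mul_le_mul_of_nonneg_left hγω.le (mul_nonneg hγ0.le ha.le)]
  have hS : 2 * (γ * ω * a / (4 * D)) ≤ wa + wb := by
    have : γ * ω * a / D = γ * ω * a / (2 * D) + 2 * (γ * ω * a / (4 * D)) := by
      field_simp; ring
    linarith
  have h2a : D ≤ (2 * a) ^ (1 - τ) * (2 * a) := by
    rw [← rpow_add_one (by positivity), show 1 - τ + 1 = 2 - τ by ring]
    exact hda.trans (rpow_le_rpow ha.le (by linarith) (by linarith))
  calc γ ^ 2 * ω ^ 2 / 8 ≤ γ ^ 2 * ω ^ 2 / 8 * ((2 * a) ^ (1 - τ) * (2 * a) / D) :=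
        le_mul_of_one_le_right (by positivity) ((one_le_div hD).2 h2a)
    _ = γ * ω * (2 * a) ^ (1 - τ) * (γ * ω * a / (4 * D)) := by field_simp; ring
    _ ≤ wa * wb := mul_le_mul_of_two_mul_le_add (by positivity)
        (mul_rpow_le_of_le hτ1.le hκ ha (by linarith) hwa)
        (mul_rpow_le_of_le hτ1.le hκ hb hba hwb) hS

lemma divisor_product_bound_large (hτ1 : 1 < τ) (hτ2 : τ < 2) (hγ0 : 0 < γ) (hγ1 : γ < 1)
    (hγω : γ < ω) (hr : 0 ≤ r) (hab : 1 ≤ b - a)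
    (hlarge : (γ ^ 2 + 4 * r) * (b - a) ^ (τ / (2 - τ)) / γ ^ 2 < a)
    (hwa : γ * ω * a ^ (1 - τ) ≤ wa) (hwb : γ * ω * b ^ (1 - τ) ≤ wb)
    (hsum : γ / (b - a) ^ τ < (wb + r) / (ω * b) + (wa + r) / (ω * a)) :
    (1 / (8 * (r + 1)) * γ ^ 3 * ω) ^ 2 ≤
      wa * wb * ((b - a) ^ (τ * (τ - 1) / (2 - τ))) ^ 2 := by
  set d := b - a with hd
  set q := τ / (2 - τ)
  have hω : 0 < ω := hγ0.trans hγω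
  have hγ2 : 0 < γ ^ 2 := by positivity
  have hlarge' : γ ^ 2 * d ^ q + 4 * r * d ^ q < γ ^ 2 * a := by
    rw [div_lt_iff₀ hγ2] at hlarge; linarith
  have hdq0 : 0 ≤ d ^ q := rpow_nonneg (by linarith) q
  have hdq : d ^ q < a := lt_of_mul_lt_mul_left (by nlinarith) hγ2.le
  have hdτ : d ^ τ ≤ d ^ q :=
    rpow_le_rpow_of_exponent_le hab (by rw [le_div_iff₀ (by linarith)]; nlinarith)
  have hdd : d ≤ d ^ τ := self_le_rpow_of_one_le hab hτ1.le
  have hda : d ^ τ ≤ a ^ (2 - τ) := by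
    have h := rpow_le_rpow (by positivity) hdq.le (by linarith : (0 : ℝ) ≤ 2 - τ)
    rwa [← rpow_mul (by linarith), div_mul_cancel₀ _ (by linarith)] at h
  have hra : 4 * r * d ^ τ < γ ^ 2 * a := by
    nlinarith [mul_le_mul_of_nonneg_left hdτ (by linarith : (0 : ℝ) ≤ 4 * r)]
  have hprod := sq_mul_sq_div_eight_le_mul hτ1 hτ2 hγ0 hγω hr (by linarith) (by linarith)
    (by linarith) hda hra hwa hwb hsum
  have hσ : 1 ≤ d ^ (τ * (τ - 1) / (2 - τ)) :=
    one_le_rpow hab (div_nonneg (by nlinarith) (by linarith))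
  have hL : 1 / (8 * (r + 1)) * γ ^ 3 * ω ≤ γ * ω / 8 := by
    have h1 : 1 / (8 * (r + 1)) ≤ 1 / 8 := by gcongr; linarith
    have h2 : γ ^ 3 ≤ γ := pow_le_of_le_one hγ0.le hγ1.le (by norm_num)
    calc 1 / (8 * (r + 1)) * γ ^ 3 * ω ≤ 1 / 8 * γ * ω := by gcongr
      _ = γ * ω / 8 := by ring
  calc (1 / (8 * (r + 1)) * γ ^ 3 * ω) ^ 2 ≤ (γ * ω / 8) ^ 2 :=
        pow_le_pow_left₀ (by positivity) hL 2
    _ ≤ γ ^ 2 * ω ^ 2 / 8 := by nlinarith [sq_nonneg (γ * ω)]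
    _ ≤ wa * wb := hprod
    _ ≤ wa * wb * (d ^ (τ * (τ - 1) / (2 - τ))) ^ 2 :=
        le_mul_of_one_le_right ((by positivity : (0 : ℝ) ≤ γ ^ 2 * ω ^ 2 / 8).trans hprod)
          (one_le_pow₀ hσ)

lemma divisor_product_bound (hτ1 : 1 < τ) (hτ2 : τ < 2) (hγ0 : 0 < γ) (hγ1 : γ < 1)
    (hγω : γ < ω) (hr : 0 ≤ r) (ha : 1 ≤ a) (hab : 1 ≤ b - a)
    (hwa : γ * ω * a ^ (1 - τ) ≤ wa) (hwb : γ * ω * b ^ (1 - τ) ≤ wb)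
    (hsum : γ / (b - a) ^ τ < (wb + r) / (ω * b) + (wa + r) / (ω * a)) :
    (1 / (8 * (r + 1)) * γ ^ 3 * ω) ^ 2 ≤
      wa * wb * ((b - a) ^ (τ * (τ - 1) / (2 - τ))) ^ 2 := by
  rcases le_or_gt a ((γ ^ 2 + 4 * r) * (b - a) ^ (τ / (2 - τ)) / γ ^ 2) with hsmall | hlarge
  · exact divisor_product_bound_small hτ1 hτ2 hγ0 hγ1 (hγ0.trans hγω) hr (by linarith) hab
      hsmall hwa hwb
  · exact divisor_product_bound_large hτ1 hτ2 hγ0 hγ1 hγω hr hab hlarge hwa hwb hsum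

end ProductBound

lemma one_div_sqrt_le_div_of_sq_le {P E X : ℝ} (hP : 0 < P) (hX : 0 < X) (hE : 0 ≤ E)
    (h : X ^ 2 ≤ P * E ^ 2) : 1 / √P ≤ E / X := by
  have hXE : X ≤ √P * E := by
    rw [← pow_le_pow_iff_left₀ hX.le (by positivity) two_ne_zero, mul_pow, sq_sqrt hP.le]
    exact h
  rw [div_le_div_iff₀ (sqrt_pos.2 hP) hX, one_mul, mul_comm]
  exact hXE

lemma one_div_sqrt_mul_le_of_melnikov {τ γ ω c r wa wb : ℝ} (hτ1 : 1 < τ) (hτ2 : τ < 2)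
    (hγ0 : 0 < γ) (hγ1 : γ < 1) (hγω : γ < ω) (hc : 0 < c) (hr : 0 ≤ r) {a b ja jb : ℕ}
    (ha : 1 ≤ a) (hab : a < b)
    (hwa : γ * ω * (a : ℝ) ^ (1 - τ) ≤ wa) (hwb : γ * ω * (b : ℝ) ^ (1 - τ) ≤ wb)
    (hja : |ω * a - ja / c| ≤ (wa + r) / (ω * a))
    (hjb : |ω * b - jb / c| ≤ (wb + r) / (ω * b))
    (hmel : ∀ j : ℕ, γ / ((b - a : ℕ) : ℝ) ^ τ < |ω * (b - a : ℕ) - j / c|) :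
    1 / √(wa * wb) ≤
      |(b : ℝ) - a| ^ (τ * (τ - 1) / (2 - τ)) / (1 / (8 * (r + 1)) * γ ^ 3 * ω) := by
  have hω : 0 < ω := hγ0.trans hγω
  have ha' : (1 : ℝ) ≤ a := by exact_mod_cast ha
  have hd : (1 : ℝ) ≤ b - a := by rw [le_sub_iff_add_le']; exact_mod_cast hab
  have hsum := (lt_abs_add_abs_of_melnikov hγ0 hγω hc (by linarith) hab hmel ja jb).trans_le
    (add_le_add hjb hja)
  have hwa0 : 0 < wa :=
    (mul_pos (mul_pos hγ0 hω) (rpow_pos_of_pos (by linarith) _)).trans_le hwa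
  have hwb0 : 0 < wb :=
    (mul_pos (mul_pos hγ0 hω) (rpow_pos_of_pos (by linarith) _)).trans_le hwb
  rw [abs_of_pos (by linarith)]
  exact one_div_sqrt_le_div_of_sq_le (mul_pos hwa0 hwb0) (by positivity) (by positivity)
    (divisor_product_bound hτ1 hτ2 hγ0 hγ1 hγω hr ha' hd hwa hwb hsum)

/-- Claim (F1), formula (5.16): the central small-divisor estimate. Under the
first-order Melnikov non-resonance conditions and the eigenvalue asymptotics
`|√λ_{j*} − j*/c| ≤ M/j*` with `j* ≥ 𝔑ωl`, there exists `L > 0`, depending only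
on `τ` and the ratio `r = M/𝔑`, such that
`1/√(ϖ_l ϖ_k) ≤ |k−l|^σ/(Lγ³ω)` for all `k ≠ l` in `{1,…,N}`, where
`σ = τ(τ−1)/(2−τ)`. -/
theorem stmt_10 (τ : ℝ) (hτ : τ ∈ Set.Ioo (1 : ℝ) 2) (r : ℝ) :
    ∃ L : ℝ, 0 < L ∧
      ∀ (γ c M 𝔑 ω : ℝ) (N : ℕ) (lam : ℕ → ℝ) (ϖ : ℕ → ℝ) (jstar : ℕ → ℕ),
        γ ∈ Set.Ioo (0 : ℝ) 1 → 0 < c → 0 < M → 0 < 𝔑 → M / 𝔑 = r → γ < ω →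
        1 ≤ N →
        (∀ j, 0 < lam j) →
        Filter.Tendsto lam Filter.atTop Filter.atTop →
        (∀ l : ℕ, 1 ≤ l → l ≤ N →
          ϖ l = |ω ^ 2 * (l : ℝ) ^ 2 - lam (jstar l)| ∧
          ∀ j : ℕ, ϖ l ≤ |ω ^ 2 * (l : ℝ) ^ 2 - lam j|) →
        (∀ l : ℕ, 1 ≤ l → l ≤ N → ∀ j : ℕ,
          γ / (l : ℝ) ^ τ < |ω * l - Real.sqrt (lam j)|) →
        (∀ l : ℕ, 1 ≤ l → l ≤ N → ∀ j : ℕ,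
          γ / (l : ℝ) ^ τ < |ω * l - (j : ℝ) / c|) →
        (∀ l : ℕ, 1 ≤ l → l ≤ N →
          𝔑 * ω * l ≤ (jstar l : ℝ) ∧
          |Real.sqrt (lam (jstar l)) - (jstar l : ℝ) / c| ≤ M / (jstar l : ℝ)) →
        ∀ k l : ℕ, 1 ≤ k → k ≤ N → 1 ≤ l → l ≤ N → k ≠ l →
          1 / Real.sqrt (ϖ l * ϖ k) ≤
            |(k : ℝ) - (l : ℝ)| ^ (τ * (τ - 1) / (2 - τ)) / (L * γ ^ 3 * ω) := by
  obtain ⟨hτ1, hτ2⟩ := hτ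
  refine ⟨1 / (8 * (|r| + 1)), by positivity, ?_⟩
  intro γ c M 𝔑 ω N lam ϖ jstar ⟨hγ0, hγ1⟩ hc hM h𝔑 hr hγω _ hlam _ hmin hmel₁ hmel₂ hasym
    k l hk hkN hl hlN hkl
  have hω : 0 < ω := hγ0.trans hγω
  rw [← hr, abs_of_pos (div_pos hM h𝔑)]
  have hlow (i : ℕ) (hi : 1 ≤ i) (hiN : i ≤ N) : γ * ω * (i : ℝ) ^ (1 - τ) ≤ ϖ i :=
    (hmin i hi hiN).1 ▸ mul_rpow_one_sub_le_abs_sq_sub hω (by positivity) (hlam _).le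
      (hmel₁ i hi hiN _)
  have hnear (i : ℕ) (hi : 1 ≤ i) (hiN : i ≤ N) :
      |ω * i - jstar i / c| ≤ (ϖ i + M / 𝔑) / (ω * i) :=
    (hmin i hi hiN).1 ▸ abs_mul_sub_div_le hω (by positivity) (hlam _).le h𝔑 hM.le
      (hasym i hi hiN).1 (hasym i hi hiN).2
  have hpair (a b : ℕ) (ha : 1 ≤ a) (hab : a < b) (hbN : b ≤ N) :
      1 / √(ϖ a * ϖ b) ≤
        |(b : ℝ) - a| ^ (τ * (τ - 1) / (2 - τ)) / (1 / (8 * (M / 𝔑 + 1)) * γ ^ 3 * ω) :=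
    one_div_sqrt_mul_le_of_melnikov hτ1 hτ2 hγ0 hγ1 hγω hc (by positivity) ha hab
      (hlow a ha (by omega)) (hlow b (by omega) hbN) (hnear a ha (by omega))
      (hnear b (by omega) hbN) (hmel₂ _ (by omega) (by omega))
  rcases hkl.lt_or_gt with h | h
  · rw [abs_sub_comm, mul_comm]; exact hpair k l hk h hlN
  · exact hpair l k hl h hkN
end

section
/- For every real number s > 1/2, the series ∑_{k∈ℤ} 1/(1+|k|^{2s}) converges, and for every l ∈ ℤ one has ∑_{k∈ℤ} (1+|l|^{2s}) / ((1+|k|^{2s})·(1+|l−k|^{2s})) ≤ 2^{2s}·∑_{k∈ℤ} 1/(1+|k|^{2s}). -/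
lemma aux_rpow_add_le (x y p : ℝ) (hx : 0 ≤ x) (hy : 0 ≤ y) (hp : 1 ≤ p) :
    (x + y) ^ p ≤ 2 ^ (p - 1) * (x ^ p + y ^ p) := by
  have h := NNReal.coe_le_coe.2
    (NNReal.rpow_add_le_mul_rpow_add_rpow x.toNNReal y.toNNReal hp)
  simpa [NNReal.coe_rpow, Real.coe_toNNReal x hx, Real.coe_toNNReal y hy] using h

/-- Key summability estimate of Appendix 8.1: for `s > 1/2` the series
`∑ 1/(1+|k|^{2s})` converges and, uniformly in `l`,
`∑_k (1+|l|^{2s})/((1+|k|^{2s})(1+|l−k|^{2s})) ≤ 2^{2s} ∑_k 1/(1+|k|^{2s})`. -/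
theorem stmt_15 (s : ℝ) (hs : 1 / 2 < s) :
    Summable (fun k : ℤ => 1 / (1 + |(k : ℝ)| ^ (2 * s))) ∧
      ∀ l : ℤ,
        ∑' k : ℤ, (1 + |(l : ℝ)| ^ (2 * s)) /
            ((1 + |(k : ℝ)| ^ (2 * s)) * (1 + |((l : ℝ) - (k : ℝ))| ^ (2 * s))) ≤
          (2 : ℝ) ^ (2 * s) * ∑' k : ℤ, 1 / (1 + |(k : ℝ)| ^ (2 * s)) := by
  have hp : (1:ℝ) < 2 * s := by linarith
  set f : ℤ → ℝ := fun k => 1 / (1 + |(k : ℝ)| ^ (2 * s)) with hf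
  have hsum : Summable f := by
    rw [← Finset.summable_compl_iff ({0} : Finset ℤ)]
    have h0 : Summable (fun k : ℤ => 1 / |(k:ℝ)| ^ (2*s)) := by
      simpa using (Real.summable_one_div_int_add_rpow 0 (2*s)).2 hp
    refine Summable.of_nonneg_of_le (fun k => by positivity) ?_ (h0.subtype _)
    rintro ⟨k, hk⟩
    simp only [Finset.mem_singleton] at hk
    have hk0 : (0:ℝ) < |(k:ℝ)| := by
      simp only [abs_pos, Int.cast_ne_zero]; exact hk
    have hk1 : (0:ℝ) < |(k:ℝ)| ^ (2*s) := Real.rpow_pos_of_pos hk0 _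
    exact one_div_le_one_div_of_le hk1 (by linarith)
  refine ⟨hsum, fun l => ?_⟩
  have hpos : ∀ x : ℝ, 0 < 1 + |x| ^ (2*s) := fun x => by positivity
  set g : ℤ → ℝ := fun k => (1 + |(l : ℝ)| ^ (2 * s)) /
      ((1 + |(k : ℝ)| ^ (2 * s)) * (1 + |((l : ℝ) - (k : ℝ))| ^ (2 * s))) with hg
  have hsum2 : Summable (fun k : ℤ => f (l - k)) :=
    hsum.comp_injective (Equiv.subLeft l).injective
  have key : ∀ k : ℤ, g k ≤ 2 ^ (2*s - 1) * (f (l - k) + f k) := by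
    intro k
    set a := |(k:ℝ)| ^ (2*s) with ha
    set b := |((l:ℝ) - (k:ℝ))| ^ (2*s) with hb
    have ha0 : 0 < 1 + a := hpos _
    have hb0 : 0 < 1 + b := hpos _
    have hnum : 1 + |(l:ℝ)| ^ (2*s) ≤ 2 ^ (2*s - 1) * ((1 + a) + (1 + b)) := by
      have h1 : |(l:ℝ)| ^ (2*s) ≤ (|(k:ℝ)| + |((l:ℝ) - (k:ℝ))|) ^ (2*s) := by
        apply Real.rpow_le_rpow (abs_nonneg _) _ (by linarith)
        calc |(l:ℝ)| = |(k:ℝ) + ((l:ℝ) - (k:ℝ))| := by ring_nf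
          _ ≤ |(k:ℝ)| + |((l:ℝ) - (k:ℝ))| := abs_add_le _ _
      have h2 := aux_rpow_add_le |(k:ℝ)| |((l:ℝ) - (k:ℝ))| (2*s)
        (abs_nonneg _) (abs_nonneg _) (le_of_lt hp)
      have h3 : (1:ℝ) ≤ 2 ^ (2*s - 1) :=
        Real.one_le_rpow (by norm_num) (by linarith)
      nlinarith [h1, h2, h3]
    calc g k ≤ (2 ^ (2*s - 1) * ((1 + a) + (1 + b))) / ((1 + a) * (1 + b)) :=
          div_le_div_of_nonneg_right hnum (mul_pos ha0 hb0).le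
      _ = 2 ^ (2*s - 1) * (f (l - k) + f k) := by
          rw [hf]
          have hcast : |((l - k : ℤ) : ℝ)| = |((l:ℝ) - (k:ℝ))| := by push_cast; ring_nf
          simp only [hcast]
          field_simp
          ring
  have hgpos : ∀ k, 0 ≤ g k := fun k => by
    have := hpos |(k:ℝ)|; positivity
  have hrhs : Summable (fun k : ℤ => 2 ^ (2*s - 1) * (f (l - k) + f k)) :=
    (hsum2.add hsum).mul_left _
  have hgsum : Summable g := Summable.of_nonneg_of_le hgpos key hrhs
  clear_value f g
  calc ∑' k, g k ≤ ∑' k, 2 ^ (2*s - 1) * (f (l - k) + f k) :=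
        Summable.tsum_le_tsum key hgsum hrhs
    _ = 2 ^ (2*s - 1) * ((∑' k, f (l - k)) + ∑' k, f k) := by
        rw [tsum_mul_left, Summable.tsum_add hsum2 hsum]
    _ = 2 ^ (2*s - 1) * (2 * ∑' k, f k) := by
        congr 1
        have h := (Equiv.subLeft l).tsum_eq f
        simp only [Equiv.subLeft_apply] at h
        rw [h, two_mul]
    _ = (2:ℝ) ^ (2*s) * ∑' k, f k := by
        rw [show 2*s = (2*s - 1) + 1 by ring, Real.rpow_add_one (by norm_num)]
        ring
end

section
/- Let H be a normed space and for a real number s ≥ 0 and u : ℤ → H define ‖u‖_s := (∑_{l∈ℤ} (1+|l|^{2s})·‖u_l‖²)^{1/2} ∈ [0,∞]. Let 0 ≤ 𝔞 ≤ a ≤ b ≤ 𝔟 be real numbers with a + b = 𝔞 + 𝔟. Then for every u : ℤ → H with ‖u‖_𝔞 < ∞ and ‖u‖_𝔟 < ∞, one has ‖u‖_a · ‖u‖_b ≤ ‖u‖_𝔞 · ‖u‖_𝔟. -/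
lemma lgc_lemA (𝔞 a b 𝔟 : ℝ) (h0 : 0 ≤ 𝔞) (h1 : 𝔞 ≤ a) (h2 : a ≤ b) (h3 : b ≤ 𝔟)
    (hab : a + b = 𝔞 + 𝔟) (ha : 0 < a) (x : ℝ) (hx : 0 ≤ x) :
    x ^ (2*a) + x ^ (2*b) ≤ x ^ (2*𝔞) + x ^ (2*𝔟) := by
  rcases eq_or_lt_of_le hx with rfl | h
  · rw [Real.zero_rpow (by intro hc; nlinarith : (2:ℝ)*a ≠ 0),
      Real.zero_rpow (by intro hc; nlinarith : (2:ℝ)*b ≠ 0)]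
    have h1 : (0:ℝ) ≤ (0:ℝ) ^ (2*𝔞) + (0:ℝ) ^ (2*𝔟) := by positivity
    linarith
  · have e1 : x ^ (2*a) = x ^ (2*𝔞) * x ^ (2*(a-𝔞)) := by
      rw [← Real.rpow_add h]; ring_nf
    have e2 : x ^ (2*b) = x ^ (2*𝔞) * x ^ (2*(b-𝔞)) := by
      rw [← Real.rpow_add h]; ring_nf
    have e3 : x ^ (2*𝔟) = x ^ (2*𝔞) * (x ^ (2*(a-𝔞)) * x ^ (2*(b-𝔞))) := by
      rw [← Real.rpow_add h, ← Real.rpow_add h]; congr 1; linarith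
    rw [e1, e2, e3]
    have key : (1 - x ^ (2*(a-𝔞))) * (1 - x ^ (2*(b-𝔞))) ≥ 0 := by
      rcases le_total x 1 with hx1 | hx1
      · have u1 : x ^ (2*(a-𝔞)) ≤ 1 := Real.rpow_le_one h.le hx1 (by linarith)
        have u2 : x ^ (2*(b-𝔞)) ≤ 1 := Real.rpow_le_one h.le hx1 (by linarith)
        nlinarith
      · have u1 : 1 ≤ x ^ (2*(a-𝔞)) := Real.one_le_rpow hx1 (by linarith)
        have u2 : 1 ≤ x ^ (2*(b-𝔞)) := Real.one_le_rpow hx1 (by linarith)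
        nlinarith
    have hp : 0 ≤ x ^ (2*𝔞) := Real.rpow_nonneg h.le _
    nlinarith

lemma lgc_lemB (𝔞 a b 𝔟 : ℝ) (h0 : 0 ≤ 𝔞) (h1 : 𝔞 ≤ a) (h2 : a ≤ b) (h3 : b ≤ 𝔟)
    (hab : a + b = 𝔞 + 𝔟) (ha : 0 < a) (x y : ℝ) (hx : 0 ≤ x) (hy : 0 ≤ y) :
    x ^ (2*a) * y ^ (2*b) + x ^ (2*b) * y ^ (2*a) ≤
      x ^ (2*𝔞) * y ^ (2*𝔟) + x ^ (2*𝔟) * y ^ (2*𝔞) := by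
  rcases eq_or_lt_of_le hx with rfl | hxp
  · rw [Real.zero_rpow (by intro hc; nlinarith : (2:ℝ)*a ≠ 0),
      Real.zero_rpow (by intro hc; nlinarith : (2:ℝ)*b ≠ 0)]
    have h1 : (0:ℝ) ≤ (0:ℝ) ^ (2*𝔞) * y ^ (2*𝔟) + (0:ℝ) ^ (2*𝔟) * y ^ (2*𝔞) := by positivity
    linarith
  rcases eq_or_lt_of_le hy with rfl | hyp
  · rw [Real.zero_rpow (by intro hc; nlinarith : (2:ℝ)*a ≠ 0),
      Real.zero_rpow (by intro hc; nlinarith : (2:ℝ)*b ≠ 0)]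
    have h1 : (0:ℝ) ≤ x ^ (2*𝔞) * (0:ℝ) ^ (2*𝔟) + x ^ (2*𝔟) * (0:ℝ) ^ (2*𝔞) := by positivity
    linarith
  have ex1 : x ^ (2*a) = x ^ (2*𝔞) * x ^ (2*(a-𝔞)) := by rw [← Real.rpow_add hxp]; ring_nf
  have ex2 : x ^ (2*b) = x ^ (2*𝔞) * x ^ (2*(b-𝔞)) := by rw [← Real.rpow_add hxp]; ring_nf
  have ex3 : x ^ (2*𝔟) = x ^ (2*𝔞) * (x ^ (2*(a-𝔞)) * x ^ (2*(b-𝔞))) := by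
    rw [← Real.rpow_add hxp, ← Real.rpow_add hxp]; congr 1; linarith
  have ey1 : y ^ (2*a) = y ^ (2*𝔞) * y ^ (2*(a-𝔞)) := by rw [← Real.rpow_add hyp]; ring_nf
  have ey2 : y ^ (2*b) = y ^ (2*𝔞) * y ^ (2*(b-𝔞)) := by rw [← Real.rpow_add hyp]; ring_nf
  have ey3 : y ^ (2*𝔟) = y ^ (2*𝔞) * (y ^ (2*(a-𝔞)) * y ^ (2*(b-𝔞))) := by
    rw [← Real.rpow_add hyp, ← Real.rpow_add hyp]; congr 1; linarith
  rw [ex1, ex2, ex3, ey1, ey2, ey3]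
  have key : (x ^ (2*(a-𝔞)) - y ^ (2*(a-𝔞))) * (x ^ (2*(b-𝔞)) - y ^ (2*(b-𝔞))) ≥ 0 := by
    rcases le_total x y with hxy | hxy
    · have u1 : x ^ (2*(a-𝔞)) ≤ y ^ (2*(a-𝔞)) := Real.rpow_le_rpow hx hxy (by linarith)
      have u2 : x ^ (2*(b-𝔞)) ≤ y ^ (2*(b-𝔞)) := Real.rpow_le_rpow hx hxy (by linarith)
      nlinarith
    · have u1 : y ^ (2*(a-𝔞)) ≤ x ^ (2*(a-𝔞)) := Real.rpow_le_rpow hy hxy (by linarith)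
      have u2 : y ^ (2*(b-𝔞)) ≤ x ^ (2*(b-𝔞)) := Real.rpow_le_rpow hy hxy (by linarith)
      nlinarith
  have hpx : 0 ≤ x ^ (2*𝔞) := Real.rpow_nonneg hx _
  have hpy : 0 ≤ y ^ (2*𝔞) := Real.rpow_nonneg hy _
  nlinarith [mul_nonneg hpx hpy]

lemma lgc_weight (𝔞 a b 𝔟 : ℝ) (h0 : 0 ≤ 𝔞) (h1 : 𝔞 ≤ a) (h2 : a ≤ b) (h3 : b ≤ 𝔟)
    (hab : a + b = 𝔞 + 𝔟) (x y : ℝ) (hx : 0 ≤ x) (hy : 0 ≤ y) :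
    (1 + x ^ (2*a)) * (1 + y ^ (2*b)) + (1 + x ^ (2*b)) * (1 + y ^ (2*a)) ≤
      (1 + x ^ (2*𝔞)) * (1 + y ^ (2*𝔟)) + (1 + x ^ (2*𝔟)) * (1 + y ^ (2*𝔞)) := by
  rcases eq_or_lt_of_le (h0.trans h1) with ha | ha
  · have h𝔞 : 𝔞 = a := le_antisymm h1 (by linarith)
    have h𝔟 : b = 𝔟 := by linarith
    rw [h𝔞, h𝔟]
  · have A1 := lgc_lemA 𝔞 a b 𝔟 h0 h1 h2 h3 hab ha x hx
    have A2 := lgc_lemA 𝔞 a b 𝔟 h0 h1 h2 h3 hab ha y hy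
    have B := lgc_lemB 𝔞 a b 𝔟 h0 h1 h2 h3 hab ha x y hx hy
    nlinarith

-- general version of lemA including a = 0
lemma lgc_lemA' (𝔞 a b 𝔟 : ℝ) (h0 : 0 ≤ 𝔞) (h1 : 𝔞 ≤ a) (h2 : a ≤ b) (h3 : b ≤ 𝔟)
    (hab : a + b = 𝔞 + 𝔟) (x : ℝ) (hx : 0 ≤ x) :
    x ^ (2*a) + x ^ (2*b) ≤ x ^ (2*𝔞) + x ^ (2*𝔟) := by
  rcases eq_or_lt_of_le (h0.trans h1) with ha | ha
  · have h𝔞 : 𝔞 = a := le_antisymm h1 (by linarith)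
    have h𝔟 : b = 𝔟 := by linarith
    rw [h𝔞, h𝔟]
  · exact lgc_lemA 𝔞 a b 𝔟 h0 h1 h2 h3 hab ha x hx


/-- Logarithmic convexity (formula (2.3) of Lemma 8.2): if
`0 ≤ 𝔞 ≤ a ≤ b ≤ 𝔟` and `a + b = 𝔞 + 𝔟`, then `‖u‖_a ‖u‖_b ≤ ‖u‖_𝔞 ‖u‖_𝔟`. -/
theorem stmt_16 (H : Type*) [NormedAddCommGroup H]
    (𝔞 a b 𝔟 : ℝ) (h0 : 0 ≤ 𝔞) (h1 : 𝔞 ≤ a) (h2 : a ≤ b) (h3 : b ≤ 𝔟)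
    (hab : a + b = 𝔞 + 𝔟) (u : ℤ → H)
    (hu𝔞 : Summable (fun l : ℤ => (1 + |(l : ℝ)| ^ (2 * 𝔞)) * ‖u l‖ ^ 2))
    (hu𝔟 : Summable (fun l : ℤ => (1 + |(l : ℝ)| ^ (2 * 𝔟)) * ‖u l‖ ^ 2)) :
    Real.sqrt (∑' l : ℤ, (1 + |(l : ℝ)| ^ (2 * a)) * ‖u l‖ ^ 2) *
        Real.sqrt (∑' l : ℤ, (1 + |(l : ℝ)| ^ (2 * b)) * ‖u l‖ ^ 2) ≤
      Real.sqrt (∑' l : ℤ, (1 + |(l : ℝ)| ^ (2 * 𝔞)) * ‖u l‖ ^ 2) *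
        Real.sqrt (∑' l : ℤ, (1 + |(l : ℝ)| ^ (2 * 𝔟)) * ‖u l‖ ^ 2) := by
  set f : ℤ → ℝ := fun l => (1 + |(l : ℝ)| ^ (2 * a)) * ‖u l‖ ^ 2 with hfdef
  set g : ℤ → ℝ := fun l => (1 + |(l : ℝ)| ^ (2 * b)) * ‖u l‖ ^ 2 with hgdef
  set F : ℤ → ℝ := fun l => (1 + |(l : ℝ)| ^ (2 * 𝔞)) * ‖u l‖ ^ 2 with hFdef
  set G : ℤ → ℝ := fun l => (1 + |(l : ℝ)| ^ (2 * 𝔟)) * ‖u l‖ ^ 2 with hGdef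
  have hwpos : ∀ (s : ℝ) (l : ℤ), 0 ≤ 1 + |(l : ℝ)| ^ (2 * s) := fun s l => by positivity
  have hfnn : ∀ l, 0 ≤ f l := fun l => mul_nonneg (hwpos a l) (by positivity)
  have hgnn : ∀ l, 0 ≤ g l := fun l => mul_nonneg (hwpos b l) (by positivity)
  have hFnn : ∀ l, 0 ≤ F l := fun l => mul_nonneg (hwpos 𝔞 l) (by positivity)
  have hGnn : ∀ l, 0 ≤ G l := fun l => mul_nonneg (hwpos 𝔟 l) (by positivity)
  -- pointwise domination to get summability of f and g
  have hdom : ∀ l, f l + g l ≤ F l + G l := by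
    intro l
    have hA := lgc_lemA' 𝔞 a b 𝔟 h0 h1 h2 h3 hab |(l : ℝ)| (abs_nonneg _)
    have hc : (0:ℝ) ≤ ‖u l‖ ^ 2 := by positivity
    simp only [hfdef, hgdef, hFdef, hGdef]
    nlinarith
  have hFG : Summable (fun l => F l + G l) := hu𝔞.add hu𝔟
  have hf : Summable f := by
    apply Summable.of_nonneg_of_le hfnn (fun l => ?_) hFG
    have := hdom l; have := hgnn l; linarith
  have hg : Summable g := by
    apply Summable.of_nonneg_of_le hgnn (fun l => ?_) hFG
    have := hdom l; have := hfnn l; linarith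
  have hF : Summable F := hu𝔞
  have hG : Summable G := hu𝔟
  set A := ∑' l, f l with hAdef
  set B := ∑' l, g l with hBdef
  set C := ∑' l, F l with hCdef
  set D := ∑' l, G l with hDdef
  have hA0 : 0 ≤ A := tsum_nonneg hfnn
  have hB0 : 0 ≤ B := tsum_nonneg hgnn
  have hC0 : 0 ≤ C := tsum_nonneg hFnn
  have hD0 : 0 ≤ D := tsum_nonneg hGnn
  -- pointwise (in l): f l * B + g l * A ≤ F l * D + G l * C
  have hptl : ∀ l, f l * B + g l * A ≤ F l * D + G l * C := by
    intro l
    have e1 : f l * B + g l * A = ∑' m, (f l * g m + g l * f m) := by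
      rw [Summable.tsum_add (hg.mul_left (f l)) (hf.mul_left (g l)), tsum_mul_left, tsum_mul_left]
    have e2 : F l * D + G l * C = ∑' m, (F l * G m + G l * F m) := by
      rw [Summable.tsum_add (hG.mul_left (F l)) (hF.mul_left (G l)), tsum_mul_left, tsum_mul_left]
    rw [e1, e2]
    apply Summable.tsum_le_tsum _ ((hg.mul_left (f l)).add (hf.mul_left (g l)))
      ((hG.mul_left (F l)).add (hF.mul_left (G l)))
    intro m
    have hw := lgc_weight 𝔞 a b 𝔟 h0 h1 h2 h3 hab |(l : ℝ)| |(m : ℝ)| (abs_nonneg _) (abs_nonneg _)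
    have hc : (0:ℝ) ≤ ‖u l‖ ^ 2 * ‖u m‖ ^ 2 := by positivity
    have := mul_le_mul_of_nonneg_right hw hc
    simp only [hfdef, hgdef, hFdef, hGdef]
    nlinarith
  have hmain : A * B + B * A ≤ C * D + D * C := by
    have e1 : A * B + B * A = ∑' l, (f l * B + g l * A) := by
      rw [Summable.tsum_add (hf.mul_right B) (hg.mul_right A), tsum_mul_right, tsum_mul_right]
    have e2 : C * D + D * C = ∑' l, (F l * D + G l * C) := by
      rw [Summable.tsum_add (hF.mul_right D) (hG.mul_right C), tsum_mul_right, tsum_mul_right]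
    rw [e1, e2]
    exact Summable.tsum_le_tsum hptl ((hf.mul_right B).add (hg.mul_right A))
      ((hF.mul_right D).add (hG.mul_right C))
  have hABCD : A * B ≤ C * D := by linarith
  calc Real.sqrt A * Real.sqrt B = Real.sqrt (A * B) := (Real.sqrt_mul hA0 B).symm
    _ ≤ Real.sqrt (C * D) := Real.sqrt_le_sqrt hABCD
    _ = Real.sqrt C * Real.sqrt D := Real.sqrt_mul hC0 D
end

section
/- Let B be a normed ring (so ‖xy‖ ≤ ‖x‖·‖y‖ for all x, y ∈ B). For a real number r ≥ 0 and u : ℤ → B define ‖u‖_r := (∑_{l∈ℤ} (1+|l|^{2r})·‖u_l‖²)^{1/2} ∈ [0,∞]. Let s > 1/2 and s' ≥ 0 be real. Then there exists a constant C > 0, depending only on s and s', such that for all u, v : ℤ → B with ‖u‖_s, ‖u‖_{s'}, ‖v‖_s, ‖v‖_{s'} all finite, the convolution (u⋆v)_l := ∑_{k∈ℤ} u_{l−k}·v_k is absolutely convergent for every l ∈ ℤ and ‖u⋆v‖_{s'} ≤ C·(‖u‖_s·‖v‖_{s'} + ‖u‖_{s'}·‖v‖_s). -/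
/-!
Everything is done in `ℝ≥0∞`, where all series converge, writing `‖u‖_r²` as
`∑' l, (⟨l⟩_r ‖u l‖)²` with `⟨l⟩_r = √(1 + |l|^{2r})`. Peetre's inequality
`⟨l⟩_r ≤ 2^r (⟨l - k⟩_r + ⟨k⟩_r)` moves the weight of `u ⋆ v` onto one factor at a time,
Young's inequality `‖F ⋆ g‖₂ ≤ ‖F‖₂ ‖g‖₁` bounds each of the two resulting convolutions, and for
`s > 1/2` Cauchy–Schwarz gives `‖g‖₁² ≤ (∑ ⟨k⟩_s⁻²) ‖g‖_s²`. Finiteness of the final bound then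
gives the absolute convergence of the convolution and the summability of its weighted squares.
-/

open scoped ENNReal

namespace ENNReal

variable {ι : Type*}

theorem add_sq_le_two_mul (a b : ℝ≥0∞) : (a + b) ^ 2 ≤ 2 * (a ^ 2 + b ^ 2) := by
  have h := rpow_add_le_mul_rpow_add_rpow a b (p := 2) one_le_two
  norm_num [rpow_two] at h
  exact h

theorem sq_le_mul_of_le_rpow_one_div_two {a x y : ℝ≥0∞}
    (h : a ≤ x ^ (1 / 2 : ℝ) * y ^ (1 / 2 : ℝ)) : a ^ 2 ≤ x * y := by
  calc a ^ 2 ≤ (x ^ (1 / 2 : ℝ) * y ^ (1 / 2 : ℝ)) ^ 2 := by gcongr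
    _ = x * y := by
      rw [mul_pow, ← rpow_natCast, ← rpow_natCast, ← rpow_mul, ← rpow_mul]
      norm_num

theorem tsum_le_rpow_mul_rpow_of_sum_le {a b c : ι → ℝ≥0∞} {p q : ℝ} (hp : 0 ≤ p) (hq : 0 ≤ q)
    (h : ∀ s : Finset ι, ∑ i ∈ s, a i ≤ (∑ i ∈ s, b i) ^ p * (∑ i ∈ s, c i) ^ q) :
    ∑' i, a i ≤ (∑' i, b i) ^ p * (∑' i, c i) ^ q :=
  ENNReal.summable.tsum_le_of_sum_le fun s =>
    (h s).trans (by gcongr <;> exact ENNReal.sum_le_tsum s)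

theorem sq_tsum_mul_le (f g : ι → ℝ≥0∞) :
    (∑' i, f i * g i) ^ 2 ≤ (∑' i, f i ^ 2) * ∑' i, g i ^ 2 := by
  refine sq_le_mul_of_le_rpow_one_div_two
    (tsum_le_rpow_mul_rpow_of_sum_le (by norm_num) (by norm_num) fun s => ?_)
  simpa [rpow_two] using inner_le_Lp_mul_Lq s f g Real.HolderConjugate.two_two

theorem sq_tsum_mul_le_tsum_mul_tsum_mul_sq (w f : ι → ℝ≥0∞) :
    (∑' i, w i * f i) ^ 2 ≤ (∑' i, w i) * ∑' i, w i * f i ^ 2 := by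
  refine sq_le_mul_of_le_rpow_one_div_two
    (tsum_le_rpow_mul_rpow_of_sum_le (by norm_num) (by norm_num) fun s => ?_)
  have h := inner_le_weight_mul_Lp_of_nonneg s one_le_two w f
  norm_num [rpow_two] at h
  exact h

theorem sq_tsum_le_tsum_inv_sq_mul {σ : ι → ℝ≥0∞} (h0 : ∀ i, σ i ≠ 0) (htop : ∀ i, σ i ≠ ∞)
    (f : ι → ℝ≥0∞) : (∑' i, f i) ^ 2 ≤ (∑' i, (σ i)⁻¹ ^ 2) * ∑' i, (σ i * f i) ^ 2 := by
  calc (∑' i, f i) ^ 2 = (∑' i, (σ i)⁻¹ * (σ i * f i)) ^ 2 := by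
        simp_rw [← mul_assoc, ENNReal.inv_mul_cancel (h0 _) (htop _), one_mul]
    _ ≤ _ := sq_tsum_mul_le _ _

section Convolution

variable {G : Type*} [AddCommGroup G]

theorem tsum_conv_comm (f g : G → ℝ≥0∞) (l : G) :
    ∑' k, f (l - k) * g k = ∑' k, g (l - k) * f k := by
  rw [← (Equiv.subLeft l).tsum_eq fun k => f (l - k) * g k]
  simp only [Equiv.subLeft_apply]
  exact tsum_congr fun k => by simp [mul_comm]

theorem tsum_sq_conv_le (F g : G → ℝ≥0∞) :
    ∑' l, (∑' k, F (l - k) * g k) ^ 2 ≤ (∑' k, F k ^ 2) * (∑' k, g k) ^ 2 := by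
  calc ∑' l, (∑' k, F (l - k) * g k) ^ 2
      = ∑' l, (∑' k, g k * F (l - k)) ^ 2 := by simp_rw [mul_comm]
    _ ≤ ∑' l, (∑' k, g k) * ∑' k, g k * F (l - k) ^ 2 :=
        ENNReal.tsum_le_tsum fun l => sq_tsum_mul_le_tsum_mul_tsum_mul_sq _ _
    _ = (∑' k, g k) * ∑' k, g k * ∑' l, F (l - k) ^ 2 := by
        rw [ENNReal.tsum_mul_left, ENNReal.tsum_comm]
        simp_rw [ENNReal.tsum_mul_left]
    _ = (∑' k, F k ^ 2) * (∑' k, g k) ^ 2 := by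
        have shift (k : G) : ∑' l, F (l - k) ^ 2 = ∑' l, F l ^ 2 :=
          (Equiv.subRight k).tsum_eq fun l => F l ^ 2
        simp_rw [shift, ENNReal.tsum_mul_right]
        ring

end Convolution

end ENNReal

theorem enorm_tsum_mul_le {ι B : Type*} [NormedRing B] (a b : ι → B) :
    ‖∑' i, a i * b i‖ₑ ≤ ∑' i, ‖a i‖ₑ * ‖b i‖ₑ :=
  enorm_tsum_le_tsum_enorm.trans <| ENNReal.tsum_le_tsum fun i => by
    simpa [enorm_eq_nnnorm, ← ENNReal.coe_mul] using nnnorm_mul_le (a i) (b i)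

theorem Real.sqrt_one_add_abs_add_rpow_le {r : ℝ} (hr : 0 ≤ r) (x y : ℝ) :
    √(1 + |x + y| ^ (2 * r)) ≤ 2 ^ r * (√(1 + |x| ^ (2 * r)) + √(1 + |y| ^ (2 * r))) := by
  obtain ⟨m, hm_def⟩ : ∃ m, m = max |x| |y| := ⟨_, rfl⟩
  have hm : 0 ≤ m := hm_def ▸ le_max_of_le_left (abs_nonneg x)
  have hxy : |x + y| ^ (2 * r) ≤ (2 ^ r) ^ 2 * m ^ (2 * r) := by
    calc |x + y| ^ (2 * r) ≤ (2 * m) ^ (2 * r) := by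
          gcongr
          have := hm_def ▸ le_max_left |x| |y|
          have := hm_def ▸ le_max_right |x| |y|
          exact (abs_add_le x y).trans (by linarith)
      _ = (2 ^ r) ^ 2 * m ^ (2 * r) := by
          rw [Real.mul_rpow zero_le_two hm, ← Real.rpow_natCast, ← Real.rpow_mul zero_le_two]
          ring_nf
  have h2 : 1 ≤ (2 ^ r : ℝ) ^ 2 := one_le_pow₀ (Real.one_le_rpow one_le_two hr)
  have hmax : √(1 + m ^ (2 * r)) ≤ √(1 + |x| ^ (2 * r)) + √(1 + |y| ^ (2 * r)) := by
    rcases max_choice |x| |y| with h | h <;> rw [hm_def, h] <;> simp [Real.sqrt_nonneg]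
  calc √(1 + |x + y| ^ (2 * r)) ≤ √((2 ^ r) ^ 2 * (1 + m ^ (2 * r))) := by
        gcongr
        nlinarith [Real.rpow_nonneg hm (2 * r)]
    _ = 2 ^ r * √(1 + m ^ (2 * r)) := by
        rw [Real.sqrt_mul' _ (by positivity), Real.sqrt_sq (by positivity)]
    _ ≤ _ := by gcongr

noncomputable def sobolevWeight (r : ℝ) (l : ℤ) : ℝ≥0∞ :=
  ENNReal.ofReal √(1 + |(l : ℝ)| ^ (2 * r))

/-- `sobolevSq r (‖u ·‖ₑ)` is the square of the paper's `‖u‖_r`; it lives in `ℝ≥0∞` so that it is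
defined without any summability assumption. -/
noncomputable def sobolevSq (r : ℝ) (f : ℤ → ℝ≥0∞) : ℝ≥0∞ :=
  ∑' l, (sobolevWeight r l * f l) ^ 2

theorem sobolevWeight_sq (r : ℝ) (l : ℤ) :
    sobolevWeight r l ^ 2 = ENNReal.ofReal (1 + |(l : ℝ)| ^ (2 * r)) := by
  rw [sobolevWeight, ← ENNReal.ofReal_pow (Real.sqrt_nonneg _), Real.sq_sqrt (by positivity)]

theorem one_le_sobolevWeight (r : ℝ) (l : ℤ) : 1 ≤ sobolevWeight r l :=
  ENNReal.one_le_ofReal.2 <| Real.one_le_sqrt.2 <| le_add_of_nonneg_right (by positivity)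

theorem sobolevWeight_ne_zero (r : ℝ) (l : ℤ) : sobolevWeight r l ≠ 0 :=
  (zero_lt_one.trans_le (one_le_sobolevWeight r l)).ne'

theorem sobolevWeight_ne_top (r : ℝ) (l : ℤ) : sobolevWeight r l ≠ ∞ :=
  ENNReal.ofReal_ne_top

theorem sobolevWeight_add_le {r : ℝ} (hr : 0 ≤ r) (m n : ℤ) :
    sobolevWeight r (m + n) ≤ ENNReal.ofReal (2 ^ r) * (sobolevWeight r m + sobolevWeight r n) := by
  rw [sobolevWeight, sobolevWeight, sobolevWeight, Int.cast_add,
    ← ENNReal.ofReal_add (by positivity) (by positivity), ← ENNReal.ofReal_mul (by positivity)]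
  exact ENNReal.ofReal_le_ofReal (Real.sqrt_one_add_abs_add_rpow_le hr _ _)

theorem tsum_inv_sobolevWeight_sq_ne_top {s : ℝ} (hs : 1 / 2 < s) :
    ∑' l, (sobolevWeight s l)⁻¹ ^ 2 ≠ ∞ := by
  have hterm (l : ℤ) :
      (sobolevWeight s l)⁻¹ ^ 2 = ENNReal.ofReal (1 + |(l : ℝ)| ^ (2 * s))⁻¹ := by
    rw [← ENNReal.inv_pow, sobolevWeight_sq, ENNReal.ofReal_inv_of_pos (by positivity)]
  simp_rw [hterm]
  refine Summable.tsum_ofReal_ne_top <|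
    (Real.summable_abs_int_rpow (b := 2 * s) (by linarith)).of_norm_bounded_eventually <|
      (Filter.eventually_cofinite_ne 0).mono fun l hl => ?_
  have hpos : 0 < |(l : ℝ)| ^ (2 * s) :=
    Real.rpow_pos_of_pos (abs_pos.2 (Int.cast_ne_zero.2 hl)) _
  rw [Real.norm_of_nonneg (by positivity), Real.rpow_neg (abs_nonneg _)]
  exact inv_anti₀ hpos (le_add_of_nonneg_left zero_le_one)

theorem sobolevSq_mono {r : ℝ} {f g : ℤ → ℝ≥0∞} (h : ∀ l, f l ≤ g l) :
    sobolevSq r f ≤ sobolevSq r g :=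
  ENNReal.tsum_le_tsum fun l => by gcongr; exact h l

theorem ne_top_of_sobolevSq_ne_top {r : ℝ} {f : ℤ → ℝ≥0∞} (h : sobolevSq r f ≠ ∞) (l : ℤ) :
    f l ≠ ∞ := by
  have hl : (sobolevWeight r l * f l) ^ 2 ≠ ∞ := ne_top_of_le_ne_top h (ENNReal.le_tsum l)
  exact ne_top_of_le_ne_top ((ENNReal.pow_ne_top_iff.1 hl).resolve_right two_ne_zero)
    (le_mul_of_one_le_left' (one_le_sobolevWeight r l))

theorem sq_tsum_le_sobolevSq (s : ℝ) (f : ℤ → ℝ≥0∞) :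
    (∑' l, f l) ^ 2 ≤ (∑' l, (sobolevWeight s l)⁻¹ ^ 2) * sobolevSq s f :=
  ENNReal.sq_tsum_le_tsum_inv_sq_mul (sobolevWeight_ne_zero s) (sobolevWeight_ne_top s) f

theorem sobolevWeight_mul_conv_le {r : ℝ} (hr : 0 ≤ r) (f g : ℤ → ℝ≥0∞) (l : ℤ) :
    sobolevWeight r l * ∑' k, f (l - k) * g k ≤
      ENNReal.ofReal (2 ^ r) * (∑' k, sobolevWeight r (l - k) * f (l - k) * g k +
        ∑' k, sobolevWeight r (l - k) * g (l - k) * f k) := by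
  calc sobolevWeight r l * ∑' k, f (l - k) * g k
      = ∑' k, sobolevWeight r (l - k + k) * (f (l - k) * g k) := by
        simp_rw [sub_add_cancel, ENNReal.tsum_mul_left]
    _ ≤ ∑' k, ENNReal.ofReal (2 ^ r) * (sobolevWeight r (l - k) + sobolevWeight r k) *
          (f (l - k) * g k) :=
        ENNReal.tsum_le_tsum fun k => by gcongr; exact sobolevWeight_add_le hr _ _
    _ = ENNReal.ofReal (2 ^ r) * (∑' k, sobolevWeight r (l - k) * f (l - k) * g k +
          ∑' k, f (l - k) * (sobolevWeight r k * g k)) := by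
        rw [← ENNReal.tsum_add, ← ENNReal.tsum_mul_left]
        exact tsum_congr fun k => by ring
    _ = _ := by rw [ENNReal.tsum_conv_comm f fun k => sobolevWeight r k * g k]

theorem sobolevSq_conv_le {s' : ℝ} (hs' : 0 ≤ s') (s : ℝ) (f g : ℤ → ℝ≥0∞) :
    sobolevSq s' (fun l => ∑' k, f (l - k) * g k) ≤
      2 * ENNReal.ofReal (2 ^ s') ^ 2 * (∑' l, (sobolevWeight s l)⁻¹ ^ 2) *
        (sobolevSq s f * sobolevSq s' g + sobolevSq s' f * sobolevSq s g) := by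
  set c := ENNReal.ofReal (2 ^ s')
  set A := ∑' l, (sobolevWeight s l)⁻¹ ^ 2
  set F := fun k => sobolevWeight s' k * f k
  set G := fun k => sobolevWeight s' k * g k
  calc sobolevSq s' (fun l => ∑' k, f (l - k) * g k)
      ≤ ∑' l, (c * (∑' k, F (l - k) * g k + ∑' k, G (l - k) * f k)) ^ 2 :=
        ENNReal.tsum_le_tsum fun l => pow_le_pow_left' (sobolevWeight_mul_conv_le hs' f g l) 2
    _ ≤ ∑' l, c ^ 2 * (2 * ((∑' k, F (l - k) * g k) ^ 2 + (∑' k, G (l - k) * f k) ^ 2)) :=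
        ENNReal.tsum_le_tsum fun l => by
          rw [mul_pow]; gcongr; exact ENNReal.add_sq_le_two_mul _ _
    _ = 2 * c ^ 2 *
          (∑' l, (∑' k, F (l - k) * g k) ^ 2 + ∑' l, (∑' k, G (l - k) * f k) ^ 2) := by
        rw [ENNReal.tsum_mul_left, ENNReal.tsum_mul_left, ENNReal.tsum_add]
        ring
    _ ≤ 2 * c ^ 2 * (sobolevSq s' f * (∑' k, g k) ^ 2 + sobolevSq s' g * (∑' k, f k) ^ 2) := by
        gcongr
        · exact ENNReal.tsum_sq_conv_le F g
        · exact ENNReal.tsum_sq_conv_le G f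
    _ ≤ 2 * c ^ 2 *
          (sobolevSq s' f * (A * sobolevSq s g) + sobolevSq s' g * (A * sobolevSq s f)) := by
        gcongr <;> exact sq_tsum_le_sobolevSq s _
    _ = 2 * c ^ 2 * A * (sobolevSq s f * sobolevSq s' g + sobolevSq s' f * sobolevSq s g) := by
        ring

section Bridge

variable {E : Type*} [SeminormedAddGroup E] (r : ℝ) (x : ℤ → E)

theorem sobolevWeight_mul_enorm_sq (l : ℤ) :
    (sobolevWeight r l * ‖x l‖ₑ) ^ 2 = ENNReal.ofReal ((1 + |(l : ℝ)| ^ (2 * r)) * ‖x l‖ ^ 2) := by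
  rw [mul_pow, sobolevWeight_sq, ← ofReal_norm, ← ENNReal.ofReal_pow (norm_nonneg _),
    ← ENNReal.ofReal_mul (by positivity)]

theorem toReal_sobolevSq_enorm :
    (sobolevSq r fun l => ‖x l‖ₑ).toReal = ∑' l : ℤ, (1 + |(l : ℝ)| ^ (2 * r)) * ‖x l‖ ^ 2 := by
  simp only [sobolevSq, sobolevWeight_mul_enorm_sq]
  rw [ENNReal.tsum_toReal_eq fun _ => ENNReal.ofReal_ne_top]
  exact tsum_congr fun l => ENNReal.toReal_ofReal (by positivity)

theorem sobolevSq_enorm_ne_top_iff :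
    (sobolevSq r fun l => ‖x l‖ₑ) ≠ ∞ ↔
      Summable fun l : ℤ => (1 + |(l : ℝ)| ^ (2 * r)) * ‖x l‖ ^ 2 := by
  simp only [sobolevSq, sobolevWeight_mul_enorm_sq]
  refine ⟨fun h => (ENNReal.summable_toReal h).congr fun l => ?_, Summable.tsum_ofReal_ne_top⟩
  exact ENNReal.toReal_ofReal (by positivity)

end Bridge

theorem ENNReal.sqrt_toReal_le_of_le_mul_add {z K a b c d : ℝ≥0∞} (hK : K ≠ ∞) (ha : a ≠ ∞)
    (hb : b ≠ ∞) (hc : c ≠ ∞) (hd : d ≠ ∞) (h : z ≤ K * (a * b + c * d)) :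
    √z.toReal ≤ √K.toReal * (√a.toReal * √b.toReal + √c.toReal * √d.toReal) := by
  have hz : z.toReal ≤ K.toReal * (a.toReal * b.toReal + c.toReal * d.toReal) := by
    have := ENNReal.toReal_mono (by finiteness) h
    rwa [ENNReal.toReal_mul, ENNReal.toReal_add (by finiteness) (by finiteness),
      ENNReal.toReal_mul, ENNReal.toReal_mul] at this
  have hsqrt_add (x y : ℝ) (hx : 0 ≤ x) (hy : 0 ≤ y) : √(x + y) ≤ √x + √y := by
    refine Real.sqrt_le_iff.2 ⟨by positivity, ?_⟩
    nlinarith [Real.sq_sqrt hx, Real.sq_sqrt hy, Real.sqrt_nonneg x, Real.sqrt_nonneg y]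
  calc √z.toReal ≤ √(K.toReal * (a.toReal * b.toReal + c.toReal * d.toReal)) :=
        Real.sqrt_le_sqrt hz
    _ ≤ √K.toReal * (√(a.toReal * b.toReal) + √(c.toReal * d.toReal)) := by
        rw [Real.sqrt_mul ENNReal.toReal_nonneg]
        gcongr
        exact hsqrt_add _ _ (by positivity) (by positivity)
    _ = _ := by rw [Real.sqrt_mul ENNReal.toReal_nonneg, Real.sqrt_mul ENNReal.toReal_nonneg]

/-- Moser–Nirenberg tame product estimate (formula (2.1) of Lemma 8.1):
for `s > 1/2`, `s' ≥ 0`, there is `C = C(s, s') > 0` with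
`‖u⋆v‖_{s'} ≤ C(‖u‖_s‖v‖_{s'} + ‖u‖_{s'}‖v‖_s)`. -/
theorem stmt_17 (s s' : ℝ) (hs : 1 / 2 < s) (hs' : 0 ≤ s') :
    ∃ C : ℝ, 0 < C ∧
      ∀ (B : Type) [NormedRing B], ∀ u v : ℤ → B,
        Summable (fun l : ℤ => (1 + |(l : ℝ)| ^ (2 * s)) * ‖u l‖ ^ 2) →
        Summable (fun l : ℤ => (1 + |(l : ℝ)| ^ (2 * s')) * ‖u l‖ ^ 2) →
        Summable (fun l : ℤ => (1 + |(l : ℝ)| ^ (2 * s)) * ‖v l‖ ^ 2) →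
        Summable (fun l : ℤ => (1 + |(l : ℝ)| ^ (2 * s')) * ‖v l‖ ^ 2) →
        (∀ l : ℤ, Summable (fun k : ℤ => ‖u (l - k)‖ * ‖v k‖)) ∧
        Summable (fun l : ℤ =>
          (1 + |(l : ℝ)| ^ (2 * s')) * ‖∑' k : ℤ, u (l - k) * v k‖ ^ 2) ∧
        Real.sqrt (∑' l : ℤ,
            (1 + |(l : ℝ)| ^ (2 * s')) * ‖∑' k : ℤ, u (l - k) * v k‖ ^ 2) ≤
          C * (Real.sqrt (∑' l : ℤ, (1 + |(l : ℝ)| ^ (2 * s)) * ‖u l‖ ^ 2) *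
                Real.sqrt (∑' l : ℤ, (1 + |(l : ℝ)| ^ (2 * s')) * ‖v l‖ ^ 2) +
              Real.sqrt (∑' l : ℤ, (1 + |(l : ℝ)| ^ (2 * s')) * ‖u l‖ ^ 2) *
                Real.sqrt (∑' l : ℤ, (1 + |(l : ℝ)| ^ (2 * s)) * ‖v l‖ ^ 2)) := by
  set K := 2 * ENNReal.ofReal (2 ^ s') ^ 2 * ∑' l, (sobolevWeight s l)⁻¹ ^ 2
  have hK : K ≠ ∞ := by
    have := tsum_inv_sobolevWeight_sq_ne_top hs
    finiteness
  have hK0 : K ≠ 0 := by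
    simp only [K, ne_eq, mul_eq_zero, ENNReal.tsum_eq_zero, not_or]
    refine ⟨⟨two_ne_zero, pow_ne_zero 2 (ENNReal.ofReal_pos.2 (by positivity)).ne'⟩, fun h => ?_⟩
    simpa [sobolevWeight_ne_top] using h 0
  refine ⟨√K.toReal, Real.sqrt_pos.2 (ENNReal.toReal_pos hK0 hK), fun B _ u v hu hu' hv hv' => ?_⟩
  rw [← sobolevSq_enorm_ne_top_iff] at hu hu' hv hv'
  simp only [← toReal_sobolevSq_enorm, ← sobolevSq_enorm_ne_top_iff]
  have hconv := sobolevSq_conv_le hs' s (fun k => ‖u k‖ₑ) (fun k => ‖v k‖ₑ)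
  have hfin : sobolevSq s' (fun l => ∑' k, ‖u (l - k)‖ₑ * ‖v k‖ₑ) ≠ ∞ :=
    ne_top_of_le_ne_top (by finiteness) hconv
  refine ⟨fun l => ?_, ne_top_of_le_ne_top hfin (sobolevSq_mono fun l => enorm_tsum_mul_le _ _),
    ENNReal.sqrt_toReal_le_of_le_mul_add hK hu hv' hu' hv
      ((sobolevSq_mono fun l => enorm_tsum_mul_le _ _).trans hconv)⟩
  simpa using ENNReal.summable_toReal (ne_top_of_sobolevSq_ne_top hfin l)
end
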